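/- arXiv:1906.03384 — 11 statements merged into one kernel-verified Lean document; each statement's English description precedes it below -/
import Mathlib

section
/- Let G be a connected finite simple undirected graph with Laplacian matrix L, and let F be a nonempty proper subset of the vertex set V (the followers), with leader set F̄ the complement of F. Then the system is controllable under the leader set F̄ (i.e., the Kalman rank condition holds for A = L_{F→F} and B = L_{F→F̄}) if and only if every eigenvector y of L satisfies y|_{F̄} ≠ 0, i.e., y has a nonzero entry at some vertex of F̄. -/
/-- The Kalman controllability matrix `[B, AB, A²B, …, A^{N-1}B]` (with `N = |F|`)
associated to a matrix `L` indexed by `V` and a follower set `F ⊆ V`,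
where `A = L_{F→F}` and `B = L_{F→F̄}`. -/
noncomputable def ctrbMatrix {V : Type*} [Fintype V] [DecidableEq V]
    (L : Matrix V V ℝ) (F : Finset V) :
    Matrix {v // v ∈ F} (Fin F.card × {v // v ∉ F}) ℝ :=
  Matrix.of fun i p =>
    ((L.submatrix (Subtype.val : {v // v ∈ F} → V) (Subtype.val : {v // v ∈ F} → V)) ^ (p.1 : ℕ) *
      L.submatrix (Subtype.val : {v // v ∈ F} → V) (Subtype.val : {v // v ∉ F} → V)) i p.2

open Matrix Polynomial
set_option linter.unusedVariables false
section Aux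


set_option linter.unusedSectionVars false
variable {n m : Type*} [Fintype n] [Fintype m] [DecidableEq n]

lemma vecMul_sum {ι : Type*} (s : Finset ι) (z : n → ℝ) (M : ι → Matrix n m ℝ) :
    z ᵥ* (∑ i ∈ s, M i) = ∑ i ∈ s, z ᵥ* (M i) := by
  classical
  induction s using Finset.induction with
  | empty => simp [Matrix.vecMul_zero]
  | insert _ _ h ih => simp [Finset.sum_insert h, Matrix.vecMul_add, ih]

lemma vecMul_matSMul (c : ℝ) (M : Matrix n m ℝ) (z : n → ℝ) :
    z ᵥ* (c • M) = c • (z ᵥ* M) := by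
  rw [← Matrix.mulVec_transpose, ← Matrix.mulVec_transpose, Matrix.transpose_smul,
    Matrix.smul_mulVec]

/-- Cayley–Hamilton extension: annihilation for `k < N` gives annihilation for all `k`. -/
lemma vecMul_pow_all (A : Matrix n n ℝ) (B : Matrix n m ℝ) (z : n → ℝ)
    (h : ∀ k < Fintype.card n, z ᵥ* (A ^ k * B) = 0) :
    ∀ k : ℕ, z ᵥ* (A ^ k * B) = 0 := by
  set N := Fintype.card n with hN
  have hpow : A ^ N = ∑ i ∈ Finset.range N, (-(A.charpoly.coeff i)) • A ^ i := by
    have h0 := A.aeval_self_charpoly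
    rw [Polynomial.aeval_eq_sum_range] at h0
    have hc : A.charpoly.coeff (Fintype.card n) = 1 := by
      rw [← A.charpoly_natDegree_eq_dim]; exact A.charpoly_monic.coeff_natDegree
    rw [A.charpoly_natDegree_eq_dim, Finset.sum_range_succ, hc, one_smul] at h0
    have := eq_neg_of_add_eq_zero_right h0
    rw [this, ← Finset.sum_neg_distrib]
    exact Finset.sum_congr rfl fun i _ => (neg_smul _ _).symm
  intro k
  induction k using Nat.strong_induction_on with
  | _ k ih =>
    by_cases hk : k < N
    · exact h k hk
    · push_neg at hk
      obtain ⟨j, rfl⟩ := Nat.exists_eq_add_of_le hk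
      have : A ^ (N + j) * B = ∑ i ∈ Finset.range N, (-(A.charpoly.coeff i)) • (A ^ (i + j) * B) := by
        rw [pow_add, Matrix.mul_assoc, hpow, Matrix.sum_mul]
        refine Finset.sum_congr rfl fun i _ => ?_
        rw [Matrix.smul_mul, ← Matrix.mul_assoc, ← pow_add]
      rw [this, _root_.vecMul_sum]
      refine Finset.sum_eq_zero fun i hi => ?_
      rw [vecMul_matSMul, ih (i + j) (by have := Finset.mem_range.1 hi; omega), smul_zero]

lemma exists_eigvec_mem (A : Matrix n n ℝ) (hA : A.IsSymm)
    (W : Submodule ℝ (EuclideanSpace ℝ n)) (hW : W ≠ ⊥)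
    (hinv : ∀ x ∈ W, Matrix.toEuclideanLin A x ∈ W) :
    ∃ (μ : ℝ) (w : EuclideanSpace ℝ n), w ∈ W ∧ w ≠ 0 ∧ A *ᵥ w = μ • w := by
  have hsymm : (Matrix.toEuclideanLin A).IsSymmetric := by
    rw [← Matrix.isHermitian_iff_isSymmetric]
    rw [Matrix.IsHermitian, Matrix.conjTranspose_eq_transpose_of_trivial]
    exact hA
  set T : W →ₗ[ℝ] W := (Matrix.toEuclideanLin A).restrict hinv with hT
  have hTsymm : T.IsSymmetric := fun x y => hsymm x y
  haveI : Nontrivial W := Submodule.nontrivial_iff_ne_bot.mpr hW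
  obtain ⟨μ, h⟩ : ∃ μ : ℝ, Module.End.HasEigenvalue T μ :=
    ⟨_, hTsymm.hasEigenvalue_iSup_of_finiteDimensional⟩
  obtain ⟨w, hw, hw0⟩ := h.exists_hasEigenvector
  refine ⟨μ, ↑w, w.2, by simpa using hw0, ?_⟩
  have h2 : (T w : EuclideanSpace ℝ n) = μ • (w : EuclideanSpace ℝ n) :=
    congrArg Subtype.val (Module.End.HasEigenvector.apply_eq_smul ⟨hw, hw0⟩)
  rw [hT, LinearMap.restrict_coe_apply] at h2
  exact congrArg WithLp.ofLp h2

lemma exists_sym_eigvec (A : Matrix n n ℝ) (hA : A.IsSymm) (B : Matrix n m ℝ)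
    (z : n → ℝ) (hz : z ≠ 0) (hann : ∀ k : ℕ, z ᵥ* (A ^ k * B) = 0) :
    ∃ (μ : ℝ) (w : n → ℝ), w ≠ 0 ∧ A *ᵥ w = μ • w ∧ w ᵥ* B = 0 := by
  set W : Submodule ℝ (EuclideanSpace ℝ n) :=
    { carrier := {w | ∀ k : ℕ, w ᵥ* (A ^ k * B) = 0}
      add_mem' := fun hx hy k => by
        rw [WithLp.ofLp_add, Matrix.add_vecMul, hx k, hy k, add_zero]
      zero_mem' := fun k => by simp
      smul_mem' := fun c x hx k => by
        rw [WithLp.ofLp_smul, Matrix.smul_vecMul, hx k, smul_zero] } with hWdef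
  have hzW : WithLp.toLp 2 z ∈ W := hann
  have hW : W ≠ ⊥ := Submodule.ne_bot_iff W |>.mpr ⟨WithLp.toLp 2 z, hzW, by simpa using hz⟩
  have hinv : ∀ x ∈ W, Matrix.toEuclideanLin A x ∈ W := by
    intro x hx k
    have hx' : ((Matrix.toEuclideanLin A) x).ofLp = x.ofLp ᵥ* A := by
      show A *ᵥ x.ofLp = x.ofLp ᵥ* A
      rw [← Matrix.mulVec_transpose, hA.eq]
    rw [hx', Matrix.vecMul_vecMul, ← Matrix.mul_assoc, ← pow_succ']
    exact hx (k + 1)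
  obtain ⟨μ, w, hwW, hw0, heig⟩ := exists_eigvec_mem A hA W hW hinv
  refine ⟨μ, w, (by simpa using hw0), heig, ?_⟩
  have := hwW 0
  simpa using this

lemma ctrb_rank_iff {V : Type*} [Fintype V] [DecidableEq V] (L : Matrix V V ℝ) (F : Finset V) :
    (ctrbMatrix L F).rank = F.card ↔
      ∀ z : {v // v ∈ F} → ℝ,
        (∀ k : Fin F.card,
          z ᵥ* ((L.submatrix (Subtype.val : {v // v ∈ F} → V)
              (Subtype.val : {v // v ∈ F} → V)) ^ (k : ℕ) *
            L.submatrix (Subtype.val : {v // v ∈ F} → V)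
              (Subtype.val : {v // v ∉ F} → V)) = 0) →
        z = 0 := by
  classical
  have key : ∀ z : {v // v ∈ F} → ℝ,
      (ctrbMatrix L F)ᵀ *ᵥ z = 0 ↔
      (∀ k : Fin F.card,
        z ᵥ* ((L.submatrix (Subtype.val : {v // v ∈ F} → V)
            (Subtype.val : {v // v ∈ F} → V)) ^ (k : ℕ) *
          L.submatrix (Subtype.val : {v // v ∈ F} → V)
            (Subtype.val : {v // v ∉ F} → V)) = 0) := by
    intro z
    constructor
    · intro h k
      funext j
      have := congrFun h (k, j)
      simpa [ctrbMatrix, Matrix.mulVec, Matrix.vecMul, dotProduct, mul_comm] using this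
    · intro h
      funext p
      obtain ⟨k, j⟩ := p
      have := congrFun (h k) j
      simpa [ctrbMatrix, Matrix.mulVec, Matrix.vecMul, dotProduct, mul_comm] using this
  rw [← Matrix.rank_transpose, Matrix.rank]
  have hrn := LinearMap.finrank_range_add_finrank_ker ((ctrbMatrix L F)ᵀ.mulVecLin)
  rw [Module.finrank_fintype_fun_eq_card, Fintype.card_coe] at hrn
  constructor
  · intro h z hz
    have hker : LinearMap.ker ((ctrbMatrix L F)ᵀ.mulVecLin) = ⊥ := by
      rw [← Submodule.finrank_eq_zero (R := ℝ)]
      omega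
    exact LinearMap.ker_eq_bot'.mp hker z
      (by rw [Matrix.mulVecLin_apply]; exact (key z).mpr hz)
  · intro h
    have hker : LinearMap.ker ((ctrbMatrix L F)ᵀ.mulVecLin) = ⊥ :=
      LinearMap.ker_eq_bot'.mpr fun z hz =>
        h z ((key z).mp (by rwa [Matrix.mulVecLin_apply] at hz))
    rw [← Submodule.finrank_eq_zero (R := ℝ)] at hker
    omega

lemma sum_restrict {V : Type*} [Fintype V] (F : Finset V) (g : V → ℝ)
    (h0 : ∀ v ∉ F, g v = 0) : ∑ u, g u = ∑ i : {v // v ∈ F}, g ↑i := by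
  rw [Finset.sum_coe_sort F g]
  exact (Finset.sum_subset (Finset.subset_univ F) fun u _ hu => h0 u hu).symm




end Aux

/-- The system on the connected graph `G` with followers `F` and leaders `F̄` is controllable
(Kalman rank condition) iff every eigenvector `y` of the Laplacian `L` has a nonzero entry
at some leader vertex, i.e. `y|_{F̄} ≠ 0`. -/
theorem controllable_iff_eigenvectors_nonzero_on_leaders
    {V : Type*} [Fintype V] [DecidableEq V]
    (G : SimpleGraph V) [DecidableRel G.Adj] (hconn : G.Connected)
    (F : Finset V) (hne : F.Nonempty) (hprop : F ≠ Finset.univ) :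
    (ctrbMatrix (G.lapMatrix ℝ) F).rank = F.card ↔
      ∀ (lam : ℝ) (y : V → ℝ), y ≠ 0 → (G.lapMatrix ℝ).mulVec y = lam • y →
        ∃ v : V, v ∉ F ∧ y v ≠ 0 := by
  classical
  set L := G.lapMatrix ℝ with hLdef
  set A := L.submatrix (Subtype.val : {v // v ∈ F} → V)
    (Subtype.val : {v // v ∈ F} → V) with hAdef
  set B := L.submatrix (Subtype.val : {v // v ∈ F} → V)
    (Subtype.val : {v // v ∉ F} → V) with hBdef
  have hLsym : L.IsSymm := G.isSymm_lapMatrix ℝ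
  have hAsym : A.IsSymm := by
    rw [Matrix.IsSymm, hAdef, Matrix.transpose_submatrix, hLsym.eq]
  rw [ctrb_rank_iff]
  constructor
  · intro h lam y hy0 heig
    by_contra hcon
    push_neg at hcon
    set z : {v // v ∈ F} → ℝ := fun i => y ↑i with hzdef
    have hz0 : z ≠ 0 := by
      intro hz
      apply hy0
      funext v
      by_cases hv : v ∈ F
      · exact congrFun hz ⟨v, hv⟩
      · exact hcon v hv
    have heig' : ∀ v : V, ∑ u, L v u * y u = lam * y v := fun v => by
      have := congrFun heig v
      simpa [Matrix.mulVec, dotProduct] using this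
    have hsum : ∀ v : V, ∑ i : {v // v ∈ F}, L v ↑i * y ↑i = lam * y v := fun v => by
      rw [← sum_restrict F (fun u => L v u * y u) (fun u hu => by show L v u * y u = 0; rw [hcon u hu, mul_zero])]
      exact heig' v
    have hAz : A *ᵥ z = lam • z := by
      funext i
      show ∑ j : {v // v ∈ F}, A i j * z j = lam * z i
      exact hsum ↑i
    have hzB : z ᵥ* B = 0 := by
      funext j
      show ∑ i : {v // v ∈ F}, z i * B i j = 0
      have : ∑ i : {v // v ∈ F}, z i * B i j = ∑ i : {v // v ∈ F}, L ↑j ↑i * y ↑i := by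
        refine Finset.sum_congr rfl fun i _ => ?_
        rw [hzdef, hBdef]
        simp only [Matrix.submatrix_apply]
        rw [hLsym.apply, mul_comm]
      rw [this, hsum ↑j, hcon ↑j j.2, mul_zero]
    have hzA : z ᵥ* A = lam • z := by
      have h1 : z ᵥ* A = Aᵀ *ᵥ z := (Matrix.mulVec_transpose A z).symm
      rw [h1, hAsym.eq, hAz]
    have hpow : ∀ k : ℕ, z ᵥ* A ^ k = (lam ^ k) • z := by
      intro k
      induction k with
      | zero => simp
      | succ k ih =>
        rw [pow_succ, ← Matrix.vecMul_vecMul, ih, Matrix.smul_vecMul, hzA, smul_smul, ← pow_succ]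
    have hall : ∀ k : Fin F.card, z ᵥ* (A ^ (k : ℕ) * B) = 0 := fun k => by
      rw [← Matrix.vecMul_vecMul, hpow, Matrix.smul_vecMul, hzB, smul_zero]
    exact hz0 (h z hall)
  · intro hE z hz
    by_contra hz0
    have hann : ∀ k : ℕ, z ᵥ* (A ^ k * B) = 0 := by
      refine vecMul_pow_all A B z fun k hk => ?_
      exact hz ⟨k, by rwa [Fintype.card_coe] at hk⟩
    obtain ⟨μ, w, hw0, heig, hwB⟩ := exists_sym_eigvec A hAsym B z hz0 hann
    set y : V → ℝ := fun v => if h : v ∈ F then w ⟨v, h⟩ else 0 with hydef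
    have hyF : ∀ i : {v // v ∈ F}, y ↑i = w i := fun i => dif_pos i.2
    have hy0 : y ≠ 0 := by
      intro h0
      apply hw0
      funext i
      have := congrFun h0 ↑i
      rwa [hyF i] at this
    have hsum : ∀ v : V, ∑ u, L v u * y u = ∑ i : {v // v ∈ F}, L v ↑i * w i := fun v => by
      rw [sum_restrict F (fun u => L v u * y u)
        (fun u hu => by show L v u * y u = 0; rw [hydef]; simp [dif_neg hu])]
      exact Finset.sum_congr rfl fun i _ => by rw [hyF i]
    have heigL : L *ᵥ y = μ • y := by
      funext v
      show ∑ u, L v u * y u = μ * y v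
      rw [hsum v]
      by_cases hv : v ∈ F
      · have h1 : ∑ i : {v // v ∈ F}, L v ↑i * w i = (A *ᵥ w) ⟨v, hv⟩ := rfl
        rw [h1, heig]
        have : y v = w ⟨v, hv⟩ := dif_pos hv
        rw [this]
        rfl
      · have h1 : ∑ i : {v // v ∈ F}, L v ↑i * w i = (w ᵥ* B) ⟨v, hv⟩ := by
          refine Finset.sum_congr rfl fun i _ => ?_
          rw [hBdef]
          simp only [Matrix.submatrix_apply]
          rw [hLsym.apply, mul_comm]
        rw [h1, hwB]
        have : y v = 0 := dif_neg hv
        rw [this, mul_zero]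
        rfl
    obtain ⟨v, hvF, hyv⟩ := hE μ y hy0 heigL
    exact hyv (dif_neg hvF)
end

section
/- Let G be a connected finite simple undirected graph and let S ⊆ V with |S| ≥ 2. If for every vertex v not in S either N_S(v) = ∅ or N_S(v) = S (that is, every vertex outside S is adjacent to either none or all of the vertices of S), then S is a critical vertex set of G. -/
open scoped Matrix


/-- A nonempty vertex subset `S` is a *critical vertex set* (CVS) of `G` if some
eigenvector `y` of the Laplacian of `G` vanishes at every vertex outside `S`. -/
def SimpleGraph.IsCVS {V : Type*} [Fintype V] [DecidableEq V]
    (G : SimpleGraph V) [DecidableRel G.Adj] (S : Finset V) : Prop :=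
  S.Nonempty ∧ ∃ (lam : ℝ) (y : V → ℝ), y ≠ 0 ∧ (G.lapMatrix ℝ).mulVec y = lam • y ∧
    ∀ v : V, v ∉ S → y v = 0

/-- A nonempty vertex subset `S` is a *perfect critical vertex set* (PCVS) of `G` if some
eigenvector `y` of the Laplacian of `G` vanishes at every vertex outside `S`
and is nonzero at every vertex of `S`. -/
def SimpleGraph.IsPCVS {V : Type*} [Fintype V] [DecidableEq V]
    (G : SimpleGraph V) [DecidableRel G.Adj] (S : Finset V) : Prop :=
  S.Nonempty ∧ ∃ (lam : ℝ) (y : V → ℝ), y ≠ 0 ∧ (G.lapMatrix ℝ).mulVec y = lam • y ∧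
    (∀ v : V, v ∉ S → y v = 0) ∧ ∀ v : V, v ∈ S → y v ≠ 0

/-- A PCVS `S` is a *minimal perfect critical vertex set* (MPCVS) if no proper
(nonempty) subset of `S` is a PCVS. -/
def SimpleGraph.IsMPCVS {V : Type*} [Fintype V] [DecidableEq V]
    (G : SimpleGraph V) [DecidableRel G.Adj] (S : Finset V) : Prop :=
  G.IsPCVS S ∧ ∀ T : Finset V, T ⊂ S → ¬ G.IsPCVS T

/-- Column sums of the Laplacian vanish: `∑ v, (L *ᵥ x) v = 0`. -/
lemma lapMatrix_sum_mulVec_eq_zero {V : Type*} [Fintype V] [DecidableEq V]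
    (G : SimpleGraph V) [DecidableRel G.Adj] (x : V → ℝ) :
    ∑ v, ((G.lapMatrix ℝ) *ᵥ x) v = 0 := by
  simp only [Matrix.mulVec, dotProduct]
  rw [Finset.sum_comm]
  refine Finset.sum_eq_zero fun u _ => ?_
  rw [← Finset.sum_mul]
  have h1 : ∑ v, (G.lapMatrix ℝ) v u = 0 := by
    have h2 : ∀ v, (G.lapMatrix ℝ) v u = (G.lapMatrix ℝ) u v := fun v =>
      (G.isSymm_lapMatrix (R := ℝ)).apply u v
    simp_rw [h2]
    have := congrFun (G.lapMatrix_mulVec_const_eq_zero (R := ℝ)) u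
    simpa [Matrix.mulVec, dotProduct] using this
  rw [h1, zero_mul]

/-- If every vertex outside `S` (with `|S| ≥ 2`) is adjacent to either none or
all of the vertices of `S`, then `S` is a critical vertex set of the connected graph `G`. -/
theorem isCVS_of_neighbors_empty_or_full {V : Type*} [Fintype V] [DecidableEq V]
    (G : SimpleGraph V) [DecidableRel G.Adj] (hconn : G.Connected)
    (S : Finset V) (hcard : 2 ≤ S.card)
    (hnbr : ∀ v : V, v ∉ S →
      S.filter (fun u => G.Adj v u) = ∅ ∨ S.filter (fun u => G.Adj v u) = S) :
    G.IsCVS S := by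
  classical
  refine ⟨Finset.card_pos.mp (by omega), ?_⟩
  set L := G.lapMatrix ℝ with hLdef
  -- the invariant subspace
  let W : Submodule ℝ (EuclideanSpace ℝ V) :=
  { carrier := {y | (∀ v, v ∉ S → y v = 0) ∧ ∑ v, y v = 0}
    add_mem' := by
      rintro a b ⟨ha1, ha2⟩ ⟨hb1, hb2⟩
      constructor
      · intro v hv
        show a v + b v = 0
        rw [ha1 v hv, hb1 v hv, add_zero]
      · show ∑ v, (a v + b v) = 0
        rw [Finset.sum_add_distrib, ha2, hb2, add_zero]
    zero_mem' := ⟨fun v _ => rfl, by simp⟩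
    smul_mem' := by
      rintro c a ⟨ha1, ha2⟩
      constructor
      · intro v hv
        show c * a v = 0
        rw [ha1 v hv, mul_zero]
      · show ∑ v, c * a v = 0
        rw [← Finset.mul_sum, ha2, mul_zero] }
  have hmemW : ∀ y : EuclideanSpace ℝ V,
      y ∈ W ↔ (∀ v, v ∉ S → y v = 0) ∧ ∑ v, y v = 0 := fun y => Iff.rfl
  -- sums over S of vectors vanishing off S equal full sums
  have hsumS : ∀ y : V → ℝ, (∀ v, v ∉ S → y v = 0) → ∑ v ∈ S, y v = ∑ v, y v := by
    intro y hy
    exact Finset.sum_subset (Finset.subset_univ S) (fun v _ hv => hy v hv)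
  -- invariance of W under the Laplacian
  have hTapp : ∀ x : EuclideanSpace ℝ V, Matrix.toEuclideanLin L x = L *ᵥ x := by
    intro x; rfl
  have hinv : ∀ y ∈ W, Matrix.toEuclideanLin L y ∈ W := by
    intro y hy
    obtain ⟨hy1, hy2⟩ := (hmemW y).mp hy
    rw [hmemW, hTapp]
    constructor
    · intro v hv
      rw [SimpleGraph.lapMatrix_mulVec_apply, hy1 v hv, mul_zero, zero_sub, neg_eq_zero]
      have hfil : (G.neighborFinset v).filter (· ∈ S) = S.filter (fun u => G.Adj v u) := by
        ext u
        simp only [Finset.mem_filter, SimpleGraph.mem_neighborFinset]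
        tauto
      have : ∑ u ∈ G.neighborFinset v, y u = ∑ u ∈ (G.neighborFinset v).filter (· ∈ S), y u := by
        symm
        apply Finset.sum_filter_of_ne
        intro u _ hu
        by_contra h
        exact hu (hy1 u h)
      rw [this, hfil]
      rcases hnbr v hv with h | h
      · rw [h, Finset.sum_empty]
      · rw [h, hsumS y hy1, hy2]
    · exact lapMatrix_sum_mulVec_eq_zero G y
  -- W is nontrivial
  obtain ⟨a, ha, b, hb, hab⟩ := Finset.one_lt_card.mp (by omega : 1 < S.card)
  set y0 : EuclideanSpace ℝ V :=
    WithLp.toLp 2 (fun v => (if v = a then (1:ℝ) else 0) - (if v = b then 1 else 0)) with hy0def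
  have hy0W : y0 ∈ W := by
    rw [hmemW]
    constructor
    · intro v hv
      show (if v = a then (1:ℝ) else 0) - (if v = b then 1 else 0) = 0
      rw [if_neg (fun h : v = a => hv (h ▸ ha)), if_neg (fun h : v = b => hv (h ▸ hb)), sub_zero]
    · show ∑ v, ((if v = a then (1:ℝ) else 0) - (if v = b then 1 else 0)) = 0
      rw [Finset.sum_sub_distrib]
      simp
  have hy0ne : y0 ≠ 0 := by
    intro h
    have h2 : y0 a = 0 := by rw [h]; rfl
    have h3 : y0 a = 1 := by
      show (if a = a then (1:ℝ) else 0) - (if a = b then 1 else 0) = 1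
      rw [if_pos rfl, if_neg hab, sub_zero]
    rw [h2] at h3
    exact one_ne_zero h3.symm
  haveI : Nontrivial ↥W := ⟨⟨⟨y0, hy0W⟩, 0, fun h => hy0ne (by simpa using congrArg Subtype.val h)⟩⟩
  -- symmetric restriction has an eigenvector
  have hsym : (Matrix.toEuclideanLin L).IsSymmetric :=
    Matrix.isHermitian_iff_isSymmetric.mp (G.posSemidef_lapMatrix (R := ℝ)).1
  have hsym' := hsym.restrict_invariant hinv
  have hev := hsym'.hasEigenvalue_iSup_of_finiteDimensional
  obtain ⟨lam, hlam⟩ : ∃ lam : ℝ,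
      Module.End.HasEigenvalue ((Matrix.toEuclideanLin L).restrict hinv) lam := ⟨_, hev⟩
  obtain ⟨w, hw⟩ := hlam.exists_hasEigenvector
  refine ⟨lam, (w : V → ℝ), ?_, ?_, ?_⟩
  · intro h
    exact hw.right (by ext v; exact congrFun h v)
  · have h1 := hw.apply_eq_smul
    have h2 : Matrix.toEuclideanLin L (w : EuclideanSpace ℝ V) = lam • (w : EuclideanSpace ℝ V) :=
      congrArg Subtype.val h1
    funext v
    exact congrFun (congrArg WithLp.ofLp h2) v
  · exact fun v hv => (((hmemW _).mp w.2).1) v hv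
end

section
/- Let G be a connected finite simple undirected graph and let S be a perfect critical vertex set of G with |S| = k. Then for every vertex v not in S, the number of neighbors of v in S satisfies |N_S(v)| ≠ 1 and |N_S(v)| ≠ k − 1. -/
/-- If `S` is a perfect critical vertex set with `|S| = k` of the connected graph `G`,
then every vertex outside `S` has a number of neighbors in `S` different
from `1` and from `k - 1`. -/
theorem pcvs_neighbor_count {V : Type*} [Fintype V] [DecidableEq V]
    (G : SimpleGraph V) [DecidableRel G.Adj] (hconn : G.Connected)
    (S : Finset V) (k : ℕ) (hk : S.card = k) (hS : G.IsPCVS S) :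
    ∀ v : V, v ∉ S →
      (S.filter (fun u => G.Adj v u)).card ≠ 1 ∧
      (S.filter (fun u => G.Adj v u)).card ≠ k - 1 := by
  intro v hv
  obtain ⟨hSne, lam, y, hy0, heig, hout, hin⟩ := hS
  by_cases hlam : lam = 0
  · -- eigenvalue zero: y is constant, contradicting y v = 0 and y ≠ 0
    exfalso
    have h : Matrix.toLin' (G.lapMatrix ℝ) y = 0 := by
      rw [Matrix.toLin'_apply, heig, hlam, zero_smul]
    rw [Matrix.toLin'_apply, G.lapMatrix_mulVec_eq_zero_iff_forall_reachable] at h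
    apply hy0
    funext u
    have hc := h u v (hconn.preconnected u v)
    rw [Pi.zero_apply, hc, hout v hv]
  · set N : Finset V := S.filter (fun u => G.Adj v u) with hN
    have hNsub : N ⊆ S := Finset.filter_subset _ _
    -- the entry of the eigen-equation at v
    have hentry : ∑ u ∈ N, y u = 0 := by
      have h1 : (G.lapMatrix ℝ).mulVec y v = 0 := by
        rw [heig, Pi.smul_apply, hout v hv, smul_eq_mul, mul_zero]
      rw [SimpleGraph.lapMatrix_mulVec_apply, hout v hv, mul_zero, zero_sub,
        neg_eq_zero] at h1
      rw [← h1]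
      apply Finset.sum_subset
      · intro u hu
        rw [SimpleGraph.mem_neighborFinset]
        exact (Finset.mem_filter.mp hu).2
      · intro u hu hnu
        by_contra hne
        apply hnu
        rw [hN, Finset.mem_filter]
        refine ⟨?_, (SimpleGraph.mem_neighborFinset G v u).mp hu⟩
        by_contra hus
        exact hne (hout u hus)
    -- the total sum of y over S is zero (since lam ≠ 0)
    have hsumV : ∑ u, y u = 0 := by
      have h2 : ∑ w, (G.lapMatrix ℝ).mulVec y w = lam * ∑ u, y u := by
        rw [heig]
        simp [Finset.mul_sum, mul_comm]
      have h3 : ∑ w, (G.lapMatrix ℝ).mulVec y w = 0 := by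
        simp_rw [Matrix.mulVec, dotProduct]
        rw [Finset.sum_comm]
        apply Finset.sum_eq_zero
        intro u _
        have hsym := G.isSymm_lapMatrix (R := ℝ)
        have hrow : ∑ w, G.lapMatrix ℝ u w = 0 := by
          have := congrFun (G.lapMatrix_mulVec_const_eq_zero (R := ℝ)) u
          simpa [Matrix.mulVec, dotProduct] using this
        calc ∑ w, G.lapMatrix ℝ w u * y u
            = (∑ w, G.lapMatrix ℝ u w) * y u := by
              rw [Finset.sum_mul]
              refine Finset.sum_congr rfl fun w _ => ?_
              rw [hsym.apply u w]
          _ = 0 := by rw [hrow, zero_mul]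
      have := h3 ▸ h2
      exact (mul_eq_zero.mp this.symm).resolve_left hlam
    have hsumS : ∑ u ∈ S, y u = 0 := by
      rw [← hsumV]
      exact Finset.sum_subset (Finset.subset_univ S)
        (fun u _ hu => hout u hu)
    constructor
    · -- |N| ≠ 1
      intro hcard
      obtain ⟨w, hw⟩ := Finset.card_eq_one.mp hcard
      have hwN : w ∈ N := by rw [hw]; exact Finset.mem_singleton_self w
      have : y w = 0 := by rw [← hentry, hw, Finset.sum_singleton]
      exact hin w (hNsub hwN) this
    · -- |N| ≠ k - 1
      intro hcard
      have hk1 : 1 ≤ k := by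
        rw [← hk]
        exact Finset.card_pos.mpr hSne
      have hcard2 : (S \ N).card = 1 := by
        rw [Finset.card_sdiff_of_subset hNsub, hk, hcard]
        omega
      obtain ⟨w, hw⟩ := Finset.card_eq_one.mp hcard2
      have hwS : w ∈ S := by
        have : w ∈ S \ N := by rw [hw]; exact Finset.mem_singleton_self w
        exact (Finset.mem_sdiff.mp this).1
      have hsplit : ∑ u ∈ S \ N, y u + ∑ u ∈ N, y u = ∑ u ∈ S, y u :=
        Finset.sum_sdiff hNsub
      rw [hentry, add_zero, hsumS, hw, Finset.sum_singleton] at hsplit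
      exact hin w hwS hsplit
end

section
/- Let G be a connected finite simple undirected graph and let S ⊆ V with |S| = 2. Then S is a minimal perfect critical vertex set of G if and only if for every vertex v not in S, either N_S(v) = ∅ or N_S(v) = S. -/
open Finset

private lemma sum_nbr_pair {V : Type*} [Fintype V] [DecidableEq V]
    (G : SimpleGraph V) [DecidableRel G.Adj] {a b : V} (hab : a ≠ b)
    {y : V → ℝ} (hy : ∀ u, u ∉ ({a, b} : Finset V) → y u = 0) (v : V) :
    ∑ u ∈ G.neighborFinset v, y u
      = (if G.Adj v a then y a else 0) + (if G.Adj v b then y b else 0) := by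
  rw [← Finset.sum_subset
      (s₁ := ({a, b} : Finset V).filter (· ∈ G.neighborFinset v))
      (fun u hu => (Finset.mem_filter.mp hu).2)
      (fun u hu hnu => hy u (fun h => hnu (Finset.mem_filter.mpr ⟨h, hu⟩)))]
  rw [Finset.sum_filter, Finset.sum_pair hab]
  simp [SimpleGraph.mem_neighborFinset]

private lemma sum_nbr_single {V : Type*} [Fintype V] [DecidableEq V]
    (G : SimpleGraph V) [DecidableRel G.Adj] {c : V}
    {y : V → ℝ} (hy : ∀ u, u ∉ ({c} : Finset V) → y u = 0) (v : V) :
    ∑ u ∈ G.neighborFinset v, y u = (if G.Adj v c then y c else 0) := by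
  rw [← Finset.sum_subset
      (s₁ := ({c} : Finset V).filter (· ∈ G.neighborFinset v))
      (fun u hu => (Finset.mem_filter.mp hu).2)
      (fun u hu hnu => hy u (fun h => hnu (Finset.mem_filter.mpr ⟨h, hu⟩)))]
  rw [Finset.sum_filter, Finset.sum_singleton]
  simp [SimpleGraph.mem_neighborFinset]

/-- In a connected graph with at least two vertices, no singleton is a PCVS. -/
private lemma not_pcvs_singleton {V : Type*} [Fintype V] [DecidableEq V]
    (G : SimpleGraph V) [DecidableRel G.Adj] (hconn : G.Connected)
    (c d : V) (hdc : d ≠ c) : ¬ G.IsPCVS {c} := by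
  rintro ⟨-, lam, y, hy0, heig, hout, hin⟩
  obtain ⟨p⟩ := hconn c d
  have hnn : ¬ p.Nil := SimpleGraph.Walk.not_nil_of_ne (Ne.symm hdc)
  have hadj : G.Adj c (p.getVert 1) := SimpleGraph.Walk.adj_snd hnn
  set s := p.getVert 1 with hs
  have hsc : s ≠ c := fun h => G.loopless.irrefl c (h ▸ hadj)
  have hys : y s = 0 := hout s (by simp [hsc])
  have he := congrFun heig s
  rw [SimpleGraph.lapMatrix_mulVec_apply, sum_nbr_single G hout] at he
  simp only [Pi.smul_apply, smul_eq_mul, hys, mul_zero, hadj.symm, if_pos] at he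
  exact hin c (Finset.mem_singleton_self c) (by linarith)

private lemma degree_eq_of_cond {V : Type*} [Fintype V] [DecidableEq V]
    (G : SimpleGraph V) [DecidableRel G.Adj] {a b : V} (hab : a ≠ b)
    (h : ∀ v : V, v ∉ ({a, b} : Finset V) → (¬ G.Adj v a ∧ ¬ G.Adj v b) ∨ (G.Adj v a ∧ G.Adj v b)) :
    G.degree a = G.degree b := by
  rw [← SimpleGraph.card_neighborFinset_eq_degree, ← SimpleGraph.card_neighborFinset_eq_degree]
  apply Finset.card_equiv (Equiv.swap a b)
  intro c
  simp only [SimpleGraph.mem_neighborFinset]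
  by_cases hca : c = a
  · subst hca; simp [Equiv.swap_apply_left, G.loopless, fun h : G.Adj b b => G.loopless.irrefl b h]
  by_cases hcb : c = b
  · subst hcb
    rw [Equiv.swap_apply_right]
    exact ⟨fun h => h.symm, fun h => h.symm⟩
  · rw [Equiv.swap_apply_of_ne_of_ne hca hcb]
    rcases h c (by simp [hca, hcb]) with ⟨h1, h2⟩ | ⟨h1, h2⟩
    · constructor <;> intro hh <;> [exact absurd hh.symm h1; exact absurd hh.symm h2]
    · exact ⟨fun _ => h2.symm, fun _ => h1.symm⟩

/-- A two-element vertex subset `S` of a connected graph `G` is a minimal perfect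
critical vertex set iff every vertex outside `S` is adjacent to either none or all
of the vertices of `S` (i.e. `N_S(v) = ∅` or `N_S(v) = S`). -/
theorem isMPCVS_two_iff {V : Type*} [Fintype V] [DecidableEq V]
    (G : SimpleGraph V) [DecidableRel G.Adj] (hconn : G.Connected)
    (S : Finset V) (hcard : S.card = 2) :
    G.IsMPCVS S ↔ ∀ v : V, v ∉ S →
      S.filter (fun u => G.Adj v u) = ∅ ∨ S.filter (fun u => G.Adj v u) = S := by
  obtain ⟨a, b, hab, rfl⟩ := Finset.card_eq_two.mp hcard
  have hamem : a ∈ ({a, b} : Finset V) := by simp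
  have hbmem : b ∈ ({a, b} : Finset V) := by simp
  constructor
  · rintro ⟨⟨-, lam, y, hy0, heig, hout, hin⟩, -⟩ v hv
    have hva : v ≠ a := fun h => hv (h ▸ hamem)
    have hvb : v ≠ b := fun h => hv (h ▸ hbmem)
    have hyv : y v = 0 := hout v hv
    have he := congrFun heig v
    rw [SimpleGraph.lapMatrix_mulVec_apply, sum_nbr_pair G hab hout] at he
    simp only [Pi.smul_apply, smul_eq_mul, hyv, mul_zero] at he
    have hya := hin a hamem
    have hyb := hin b hbmem
    by_cases h1 : G.Adj v a <;> by_cases h2 : G.Adj v b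
    · right
      apply Finset.filter_true_of_mem
      intro u hu
      rcases Finset.mem_insert.mp hu with rfl | hu
      · exact h1
      · exact (Finset.mem_singleton.mp hu) ▸ h2
    · exfalso; simp [h1, h2] at he; exact hya he
    · exfalso; simp [h1, h2] at he; exact hyb he
    · left
      apply Finset.filter_false_of_mem
      intro u hu
      rcases Finset.mem_insert.mp hu with rfl | hu
      · exact h1
      · exact (Finset.mem_singleton.mp hu) ▸ h2
  · intro h
    have hcond : ∀ v : V, v ∉ ({a, b} : Finset V) →
        (¬ G.Adj v a ∧ ¬ G.Adj v b) ∨ (G.Adj v a ∧ G.Adj v b) := by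
      intro v hv
      rcases h v hv with hf | hf
      · left
        constructor <;> intro hh
        · exact absurd (Finset.mem_filter.mpr ⟨hamem, hh⟩) (by simp [hf])
        · exact absurd (Finset.mem_filter.mpr ⟨hbmem, hh⟩) (by simp [hf])
      · right
        exact ⟨(Finset.mem_filter.mp (hf ▸ hamem)).2, (Finset.mem_filter.mp (hf ▸ hbmem)).2⟩
    have hdeg : G.degree a = G.degree b := degree_eq_of_cond G hab hcond
    set y : V → ℝ := fun u => if u = a then 1 else if u = b then -1 else 0 with hy
    have hya : y a = 1 := by simp [hy]
    have hyb : y b = -1 := by simp [hy, hab.symm]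
    have hout : ∀ u, u ∉ ({a, b} : Finset V) → y u = 0 := by
      intro u hu
      simp only [Finset.mem_insert, Finset.mem_singleton, not_or] at hu
      simp [hy, hu.1, hu.2]
    constructor
    · refine ⟨⟨a, hamem⟩, (G.degree a : ℝ) + (if G.Adj a b then 1 else 0), y, ?_, ?_, hout, ?_⟩
      · intro h0
        have := congrFun h0 a
        rw [hya] at this; simp at this
      · funext v
        rw [SimpleGraph.lapMatrix_mulVec_apply, sum_nbr_pair G hab hout,
          Pi.smul_apply, smul_eq_mul]
        by_cases hva : v = a
        · subst hva
          simp only [hya, G.loopless.irrefl v, if_false, mul_one]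
          by_cases hadj : G.Adj v b <;> simp [hadj, hyb]
        by_cases hvb : v = b
        · subst hvb
          have hloop : ¬ G.Adj v v := G.loopless.irrefl v
          have hdegR : (G.degree a : ℝ) = (G.degree v : ℝ) := by exact_mod_cast hdeg
          by_cases hadj : G.Adj v a
          · have h2 : G.Adj a v := hadj.symm
            simp only [hya, hyb, if_pos hadj, if_neg hloop, if_pos h2]
            linarith
          · have h2 : ¬ G.Adj a v := fun hh => hadj hh.symm
            simp only [hya, hyb, if_neg hadj, if_neg hloop, if_neg h2]
            linarith
        · have hyv : y v = 0 := hout v (by simp [hva, hvb])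
          rw [hyv, mul_zero, mul_zero]
          rcases hcond v (by simp [hva, hvb]) with ⟨h1, h2⟩ | ⟨h1, h2⟩
          · simp [h1, h2]
          · simp [h1, h2, hya, hyb]
      · intro v hv
        rcases Finset.mem_insert.mp hv with rfl | hv
        · rw [hya]; norm_num
        · rw [Finset.mem_singleton.mp hv, hyb]; norm_num
    · intro T hT hpcvs
      have hTsub := hT.1
      rcases Finset.eq_empty_or_nonempty T with rfl | ⟨c, hc⟩
      · exact absurd hpcvs.1 (by simp)
      · -- T is a nonempty proper subset of {a,b}, so T = {c} with c ∈ {a,b}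
        have hTcard : T.card < 2 := by
          have := Finset.card_lt_card hT
          omega
        have hT1 : T.card = 1 := by
          have : 0 < T.card := Finset.card_pos.mpr ⟨c, hc⟩
          omega
        obtain ⟨e, rfl⟩ := Finset.card_eq_one.mp hT1
        have he : e ∈ ({a, b} : Finset V) := hTsub (Finset.mem_singleton_self e)
        rcases Finset.mem_insert.mp he with rfl | he'
        · exact not_pcvs_singleton G hconn e b (fun h => hab h.symm) hpcvs
        · obtain rfl := Finset.mem_singleton.mp he'
          exact not_pcvs_singleton G hconn e a hab hpcvs
end

section
/- Let G be a connected finite simple undirected graph and let S ⊆ V with |S| = 3. Then S is NOT a minimal perfect critical vertex set of G. -/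
open Finset Matrix

/-- If `u` and `v` are "twins" (same neighbours outside `{u,v}`), then the signed
indicator of `{u,v}` is a Laplacian eigenvector, so `{u,v}` is a PCVS. -/
lemma twin_pcvs {V : Type*} [Fintype V] [DecidableEq V]
    (G : SimpleGraph V) [DecidableRel G.Adj] (u v : V) (huv : u ≠ v)
    (htwin : ∀ w, w ≠ u → w ≠ v → (G.Adj u w ↔ G.Adj v w)) :
    G.IsPCVS {u, v} := by
  classical
  set z : V → ℝ := fun x => if x = u then 1 else if x = v then -1 else 0 with hz
  have hdeg : (G.degree u : ℝ) = (G.degree v : ℝ) := by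
    rw [SimpleGraph.degree_eq_sum_if_adj, SimpleGraph.degree_eq_sum_if_adj]
    refine Fintype.sum_equiv (Equiv.swap u v) _ _ ?_
    intro x
    by_cases hx : x = u
    · subst hx; simp [Equiv.swap_apply_left, G.irrefl]
    · by_cases hx' : x = v
      · subst hx'; simp [Equiv.swap_apply_right, G.adj_comm]
      · rw [Equiv.swap_apply_of_ne_of_ne hx hx']
        simp [htwin x hx hx']
  have hNsum : ∀ w : V, ∑ x ∈ G.neighborFinset w, z x =
      (if G.Adj w u then (1:ℝ) else 0) - (if G.Adj w v then (1:ℝ) else 0) := by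
    intro w
    have hrep : ∀ x : V, z x =
        (if x = u then (1:ℝ) else 0) + (if x = v then (-1:ℝ) else 0) := by
      intro x
      simp only [hz]
      by_cases hxu : x = u
      · rw [hxu, if_pos rfl, if_pos rfl, if_neg huv]; norm_num
      · by_cases hxv : x = v
        · simp [hxv, Ne.symm huv]
        · simp [hxu, hxv]
    rw [Finset.sum_congr rfl (fun x _ => hrep x), Finset.sum_add_distrib,
      Finset.sum_ite_eq' , Finset.sum_ite_eq']
    simp [SimpleGraph.mem_neighborFinset, sub_eq_add_neg, apply_ite (f := fun t : ℝ => -t)]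
  refine ⟨⟨u, by simp⟩, (G.degree u : ℝ) + (if G.Adj u v then 1 else 0), z, ?_, ?_, ?_, ?_⟩
  · intro h
    have : z u = 0 := by rw [h]; rfl
    simp [hz] at this
  · funext w
    rw [SimpleGraph.lapMatrix_mulVec_apply, hNsum, Pi.smul_apply, smul_eq_mul]
    simp only [hz]
    by_cases hw : w = u
    · rw [hw, if_pos rfl, if_neg (G.irrefl : ¬ G.Adj u u)]
      ring
    · by_cases hw' : w = v
      · rw [hw', if_neg (Ne.symm huv), if_pos rfl, if_neg (G.irrefl : ¬ G.Adj v v),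
          if_congr (G.adj_comm v u) rfl rfl, ← hdeg]
        ring
      · have h2 : G.Adj w u ↔ G.Adj w v := by
          rw [G.adj_comm w u, G.adj_comm w v]
          exact htwin w hw hw'
        rw [if_neg hw, if_neg hw', if_congr h2 rfl rfl]
        ring
  · intro x hx
    simp only [Finset.mem_insert, Finset.mem_singleton, not_or] at hx
    simp [hz, hx.1, hx.2]
  · intro x hx
    simp only [Finset.mem_insert, Finset.mem_singleton] at hx
    rcases hx with rfl | rfl
    · simp [hz]
    · simp [hz, Ne.symm huv]

/-- No three-element vertex subset of a connected graph is a minimal perfect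
critical vertex set. -/
theorem not_isMPCVS_of_card_three {V : Type*} [Fintype V] [DecidableEq V]
    (G : SimpleGraph V) [DecidableRel G.Adj] (hconn : G.Connected)
    (S : Finset V) (hcard : S.card = 3) :
    ¬ G.IsMPCVS S := by
  classical
  rintro ⟨⟨hSne, lam, y, hy0, heig, hvan, hnz⟩, hmin⟩
  obtain ⟨a, b, c, hab, hac, hbc, rfl⟩ := Finset.card_eq_three.mp hcard
  have ha : a ∈ ({a, b, c} : Finset V) := by simp
  have hb : b ∈ ({a, b, c} : Finset V) := by simp
  have hc : c ∈ ({a, b, c} : Finset V) := by simp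
  have hya := hnz a ha
  have hyb := hnz b hb
  have hyc := hnz c hc
  -- eigen-equation at each vertex
  have hEq : ∀ w : V, (G.degree w : ℝ) * y w - ∑ x ∈ G.neighborFinset w, y x = lam * y w := by
    intro w
    have := congrFun heig w
    rwa [SimpleGraph.lapMatrix_mulVec_apply, Pi.smul_apply, smul_eq_mul] at this
  have hNsum : ∀ w : V, ∑ x ∈ G.neighborFinset w, y x =
      (if G.Adj w a then y a else 0) + (if G.Adj w b then y b else 0)
        + (if G.Adj w c then y c else 0) := by
    intro w
    have hrep : ∀ x : V, y x =
        (if x = a then y a else 0) + (if x = b then y b else 0) + (if x = c then y c else 0) := by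
      intro x
      by_cases h1 : x = a
      · subst h1; simp [hab, hac]
      · by_cases h2 : x = b
        · subst h2; simp [Ne.symm hab, hbc]
        · by_cases h3 : x = c
          · subst h3; simp [Ne.symm hac, Ne.symm hbc]
          · simp [h1, h2, h3, hvan x (by simp [h1, h2, h3])]
    rw [Finset.sum_congr rfl (fun x _ => hrep x), Finset.sum_add_distrib,
      Finset.sum_add_distrib, Finset.sum_ite_eq', Finset.sum_ite_eq', Finset.sum_ite_eq']
    simp [SimpleGraph.mem_neighborFinset]
  -- the classification hypothesis we will establish in both cases
  have hcls : ∀ x, x ∉ ({a, b, c} : Finset V) →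
      ((G.Adj a x ↔ G.Adj b x) ∧ (G.Adj b x ↔ G.Adj c x)) := by
    by_cases hS3 : y a + y b + y c = 0
    · intro x hx
      have h0 := hEq x
      rw [hNsum x, hvan x hx, mul_zero, mul_zero, zero_sub, neg_eq_zero] at h0
      rw [G.adj_comm a x, G.adj_comm b x, G.adj_comm c x]
      by_cases e1 : G.Adj x a <;> by_cases e2 : G.Adj x b <;> by_cases e3 : G.Adj x c
      · exact ⟨iff_of_true e1 e2, iff_of_true e2 e3⟩
      · rw [if_pos e1, if_pos e2, if_neg e3] at h0
        exact absurd (by linarith : y c = 0) hyc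
      · rw [if_pos e1, if_neg e2, if_pos e3] at h0
        exact absurd (by linarith : y b = 0) hyb
      · rw [if_pos e1, if_neg e2, if_neg e3] at h0
        exact absurd (by linarith : y a = 0) hya
      · rw [if_neg e1, if_pos e2, if_pos e3] at h0
        exact absurd (by linarith : y a = 0) hya
      · rw [if_neg e1, if_pos e2, if_neg e3] at h0
        exact absurd (by linarith : y b = 0) hyb
      · rw [if_neg e1, if_neg e2, if_pos e3] at h0
        exact absurd (by linarith : y c = 0) hyc
      · exact ⟨iff_of_false e1 e2, iff_of_false e2 e3⟩
    · -- then lam = 0, y is constant, and V = {a,b,c}; classification is vacuous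
      have hF : lam * (y a + y b + y c) = 0 := by
        have hsumy : ∑ v, y v = y a + y b + y c := by
          rw [← Finset.sum_subset (Finset.subset_univ ({a, b, c} : Finset V))
            (fun x _ hx => hvan x hx)]
          rw [Finset.sum_insert (by simp [hab, hac]), Finset.sum_insert (by simp [hbc]),
            Finset.sum_singleton, add_assoc]
        have h2 : ∑ v, (G.lapMatrix ℝ *ᵥ y) v = 0 := by
          have hdot : (fun _ : V => (1:ℝ)) ⬝ᵥ (G.lapMatrix ℝ *ᵥ y) = 0 := by
            rw [Matrix.dotProduct_mulVec]
            have hvm : (fun _ : V => (1:ℝ)) ᵥ* G.lapMatrix ℝ = 0 := by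
              rw [← (G.isSymm_lapMatrix ℝ).eq, Matrix.vecMul_transpose,
                G.lapMatrix_mulVec_const_eq_zero]
            rw [hvm, zero_dotProduct]
          simpa [dotProduct] using hdot
        rw [heig] at h2
        have h3 : lam * ∑ v, y v = 0 := by
          rw [Finset.mul_sum]
          simpa [smul_eq_mul] using h2
        rwa [hsumy] at h3
      have hlam : lam = 0 := by
        rcases mul_eq_zero.mp hF with h | h
        · exact h
        · exact absurd h hS3
      have hker : G.lapMatrix ℝ *ᵥ y = 0 := by rw [heig, hlam, zero_smul]
      have hconst := (G.lapMatrix_mulVec_eq_zero_iff_forall_reachable (x := y)).mp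
        hker
      intro x hx
      exact absurd ((hconst a x (hconn.preconnected a x)).trans (hvan x hx)) hya
  -- helper to contradict minimality with a twin pair
  have use_twins : ∀ u v t : V, u ≠ v → t ∉ ({u, v} : Finset V) →
      ({u, v} : Finset V) ⊆ {a, b, c} → t ∈ ({a, b, c} : Finset V) →
      (∀ w, w ≠ u → w ≠ v → (G.Adj u w ↔ G.Adj v w)) → False := by
    intro u v t huv ht hsub htmem htwin
    refine hmin {u, v} ?_ (twin_pcvs G u v huv htwin)
    exact Finset.ssubset_iff_of_subset hsub |>.mpr ⟨t, htmem, ht⟩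
  -- three candidate twin pairs; one of them works by pigeonhole on three booleans
  have pair_ab : (G.Adj a c ↔ G.Adj b c) → False := by
    intro h
    refine use_twins a b c hab (by simp [Ne.symm hac, Ne.symm hbc]) (by
      intro x hx; simp only [Finset.mem_insert, Finset.mem_singleton] at hx
      rcases hx with rfl | rfl <;> simp) hc ?_
    intro w hwa hwb
    by_cases hw : w ∈ ({a, b, c} : Finset V)
    · simp only [Finset.mem_insert, Finset.mem_singleton] at hw
      rcases hw with rfl | rfl | rfl
      · exact absurd rfl hwa
      · exact absurd rfl hwb
      · exact h
    · exact (hcls w hw).1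
  have pair_ac : (G.Adj a b ↔ G.Adj c b) → False := by
    intro h
    refine use_twins a c b hac (by simp [Ne.symm hab, hbc]) (by
      intro x hx; simp only [Finset.mem_insert, Finset.mem_singleton] at hx
      rcases hx with rfl | rfl <;> simp) hb ?_
    intro w hwa hwc
    by_cases hw : w ∈ ({a, b, c} : Finset V)
    · simp only [Finset.mem_insert, Finset.mem_singleton] at hw
      rcases hw with rfl | rfl | rfl
      · exact absurd rfl hwa
      · exact h
      · exact absurd rfl hwc
    · exact ((hcls w hw).1).trans (hcls w hw).2
  have pair_bc : (G.Adj b a ↔ G.Adj c a) → False := by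
    intro h
    refine use_twins b c a hbc (by simp [hab, hac]) (by
      intro x hx; simp only [Finset.mem_insert, Finset.mem_singleton] at hx
      rcases hx with rfl | rfl <;> simp) ha ?_
    intro w hwb hwc
    by_cases hw : w ∈ ({a, b, c} : Finset V)
    · simp only [Finset.mem_insert, Finset.mem_singleton] at hw
      rcases hw with rfl | rfl | rfl
      · exact h
      · exact absurd rfl hwb
      · exact absurd rfl hwc
    · exact (hcls w hw).2
  -- pigeonhole on the three adjacency booleans
  have e1 : ¬ (G.Adj a c ↔ G.Adj b c) := fun h => pair_ab h
  have e2 : ¬ (G.Adj a b ↔ G.Adj c b) := fun h => pair_ac h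
  have e3 : ¬ (G.Adj b a ↔ G.Adj c a) := fun h => pair_bc h
  rw [G.adj_comm b a, G.adj_comm c a] at e3
  rw [G.adj_comm c b] at e2
  rw [G.adj_comm a c] at e1
  rw [G.adj_comm b c] at e1
  tauto
end

section
/- For every integer m ≥ 1 and every angle θ with 0 ≤ θ < π, setting λ = 2 − 2cos θ, the determinant of D_m − λ I_m equals cos((2m+1)θ/2) / cos(θ/2). -/
/-- The `m × m` tridiagonal matrix `D_m`: its `(1,1)` entry is `1`, all other diagonal
entries are `2`, the sub- and super-diagonal entries are `-1`, and all other entries `0`. -/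
def Dmat (m : ℕ) : Matrix (Fin m) (Fin m) ℝ :=
  Matrix.of fun i j =>
    if i = j then (if (i : ℕ) = 0 then 1 else 2)
    else if (i : ℕ) + 1 = (j : ℕ) ∨ (j : ℕ) + 1 = (i : ℕ) then -1 else 0

/-- The shifted matrix `D_m - λ I`. -/
noncomputable def Mmat (θ : ℝ) (m : ℕ) : Matrix (Fin m) (Fin m) ℝ :=
  Dmat m - (2 - 2 * Real.cos θ) • (1 : Matrix (Fin m) (Fin m) ℝ)

lemma Mmat_apply (θ : ℝ) {n : ℕ} (i j : Fin n) :
    Mmat θ n i j =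
      if (i : ℕ) = (j : ℕ) then (if (i : ℕ) = 0 then 2 * Real.cos θ - 1 else 2 * Real.cos θ)
      else if (i : ℕ) + 1 = (j : ℕ) ∨ (j : ℕ) + 1 = (i : ℕ) then -1 else 0 := by
  simp only [Mmat, Dmat, Matrix.sub_apply, Matrix.smul_apply, Matrix.one_apply, Matrix.of_apply,
    Fin.ext_iff, smul_eq_mul]
  split_ifs <;> ring

lemma Mmat_submatrix (θ : ℝ) {a b : ℕ} (f g : Fin a → Fin b)
    (hf : ∀ i, (f i : ℕ) = (i : ℕ)) (hg : ∀ j, (g j : ℕ) = (j : ℕ)) :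
    (Mmat θ b).submatrix f g = Mmat θ a := by
  ext i j
  rw [Matrix.submatrix_apply, Mmat_apply, Mmat_apply, hf, hg]

lemma Mmat_det_rec (θ : ℝ) (m : ℕ) :
    (Mmat θ (m + 2)).det =
      2 * Real.cos θ * (Mmat θ (m + 1)).det - (Mmat θ m).det := by
  have jm : Fin (m + 2) := ⟨m, by omega⟩
  rw [Matrix.det_succ_row (Mmat θ (m + 2)) (Fin.last (m + 1))]
  rw [Finset.sum_eq_add (⟨m, by omega⟩ : Fin (m + 2)) (Fin.last (m + 1))
    (by simp [Fin.ext_iff])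
    (by
      intro c _ hc
      rw [Mmat_apply]
      have h1 : (c : ℕ) ≠ m := fun h => hc.1 (by simp [Fin.ext_iff, h])
      have h2 : (c : ℕ) ≠ m + 1 := fun h => hc.2 (by simp [Fin.ext_iff, h])
      have hcl : (c : ℕ) < m + 2 := c.isLt
      rw [if_neg (by simp; omega), if_neg (by simp; omega)]
      ring)
    (by simp) (by simp)]
  -- the term at column `m`
  have hterm1 : (-1 : ℝ) ^ ((Fin.last (m + 1) : ℕ) + ((⟨m, by omega⟩ : Fin (m + 2)) : ℕ)) *
      (Mmat θ (m + 2)) (Fin.last (m + 1)) ⟨m, by omega⟩ *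
      ((Mmat θ (m + 2)).submatrix (Fin.last (m + 1)).succAbove
        (Fin.succAbove ⟨m, by omega⟩)).det = - (Mmat θ m).det := by
    have hval : (Fin.last (m + 1) : ℕ) + ((⟨m, by omega⟩ : Fin (m + 2)) : ℕ) = 2 * m + 1 := by
      simp; omega
    rw [hval]
    have hsign : (-1 : ℝ) ^ (2 * m + 1) = -1 := Odd.neg_one_pow ⟨m, by ring⟩
    have hentry : (Mmat θ (m + 2)) (Fin.last (m + 1)) ⟨m, by omega⟩ = -1 := by
      rw [Mmat_apply]
      rw [if_neg (by simp), if_pos (by simp [Fin.val_last])]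
    rw [hsign, hentry]
    -- now compute the determinant of the minor by expanding its last column
    set B := (Mmat θ (m + 2)).submatrix (Fin.last (m + 1)).succAbove
        (Fin.succAbove ⟨m, by omega⟩) with hB
    have hBcol : ∀ k : Fin (m + 1), B k (Fin.last m) = if (k : ℕ) = m then -1 else 0 := by
      intro k
      have hcol : ((Fin.succAbove ⟨m, by omega⟩ (Fin.last m) : Fin (m + 2)) : ℕ) = m + 1 := by
        rw [Fin.succAbove_of_le_castSucc _ _ (by simp [Fin.le_def])]
        simp
      have hrow : (((Fin.last (m + 1)).succAbove k : Fin (m + 2)) : ℕ) = (k : ℕ) := by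
        rw [Fin.succAbove_last]; simp
      rw [hB, Matrix.submatrix_apply, Mmat_apply, hrow, hcol]
      have hk : (k : ℕ) < m + 1 := k.isLt
      rw [if_neg (by omega)]
      by_cases h : (k : ℕ) = m
      · rw [if_pos (by omega), if_pos h]
      · rw [if_neg (by omega), if_neg h]
    have hBsub : B.submatrix (Fin.last m).succAbove (Fin.last m).succAbove = Mmat θ m := by
      rw [hB, Matrix.submatrix_submatrix]
      apply Mmat_submatrix
      · intro i
        simp [Function.comp, Fin.succAbove_last]
      · intro j
        simp only [Function.comp]
        rw [Fin.succAbove_last]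
        rw [Fin.succAbove_of_castSucc_lt _ _ (by simp [Fin.lt_def, j.isLt])]
        simp
    have hdetB : B.det = - (Mmat θ m).det := by
      rw [Matrix.det_succ_column B (Fin.last m)]
      rw [Finset.sum_eq_single (Fin.last m)]
      · rw [hBsub, hBcol, if_pos (by simp)]
        have : ((Fin.last m : Fin (m+1)) : ℕ) + ((Fin.last m : Fin (m+1)) : ℕ) = 2 * m := by
          simp; ring
        rw [this, Even.neg_one_pow ⟨m, by ring⟩]
        ring
      · intro k _ hk
        rw [hBcol, if_neg (fun h => hk (by simp [Fin.ext_iff, h]))]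
        ring
      · intro h; exact absurd (Finset.mem_univ _) h
    rw [hdetB]; ring
  -- the term at column `m+1`
  have hterm2 : (-1 : ℝ) ^ ((Fin.last (m + 1) : ℕ) + ((Fin.last (m + 1) : Fin (m+2)) : ℕ)) *
      (Mmat θ (m + 2)) (Fin.last (m + 1)) (Fin.last (m + 1)) *
      ((Mmat θ (m + 2)).submatrix (Fin.last (m + 1)).succAbove
        (Fin.last (m + 1)).succAbove).det = 2 * Real.cos θ * (Mmat θ (m + 1)).det := by
    have hsign : (-1 : ℝ) ^ ((Fin.last (m + 1) : ℕ) + ((Fin.last (m + 1) : Fin (m+2)) : ℕ))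
        = 1 := Even.neg_one_pow ⟨m + 1, by simp⟩
    have hentry : (Mmat θ (m + 2)) (Fin.last (m + 1)) (Fin.last (m + 1)) = 2 * Real.cos θ := by
      rw [Mmat_apply, if_pos rfl, if_neg (by simp)]
    have hsub : (Mmat θ (m + 2)).submatrix (Fin.last (m + 1)).succAbove
        (Fin.last (m + 1)).succAbove = Mmat θ (m + 1) := by
      apply Mmat_submatrix <;> intro i <;> simp [Fin.succAbove_last]
    rw [hsign, hentry, hsub]; ring
  rw [hterm1, hterm2]; ring

lemma Mmat_det (θ : ℝ) (hc : Real.cos (θ / 2) ≠ 0) (m : ℕ) :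
    (Mmat θ m).det = Real.cos ((2 * (m : ℝ) + 1) * θ / 2) / Real.cos (θ / 2) := by
  induction m using Nat.twoStepInduction with
  | zero =>
    have : (Mmat θ 0).det = 1 := Matrix.det_fin_zero
    rw [this]
    norm_num
    rw [div_self hc]
  | one =>
    rw [show (Mmat θ 1).det = Mmat θ 1 0 0 from Matrix.det_fin_one _]
    rw [Mmat_apply]
    norm_num
    have h3 : (3 : ℝ) * θ / 2 = 3 * (θ / 2) := by ring
    have hθ : θ = 2 * (θ / 2) := by ring
    rw [h3, Real.cos_three_mul]
    rw [hθ, Real.cos_two_mul]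
    field_simp
    ring
  | more n ih1 ih2 =>
    rw [Mmat_det_rec, ih1, ih2]
    have key : Real.cos ((2 * ((n : ℝ) + 2) + 1) * θ / 2) =
        2 * Real.cos θ * Real.cos ((2 * ((n : ℝ) + 1) + 1) * θ / 2) -
          Real.cos ((2 * (n : ℝ) + 1) * θ / 2) := by
      have e1 : (2 * ((n : ℝ) + 2) + 1) * θ / 2 = (2 * ((n : ℝ) + 1) + 1) * θ / 2 + θ := by
        ring
      have e2 : (2 * (n : ℝ) + 1) * θ / 2 = (2 * ((n : ℝ) + 1) + 1) * θ / 2 - θ := by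
        ring
      rw [e1, e2, Real.cos_add, Real.cos_sub]
      ring
    push_cast
    push_cast at key
    rw [key]
    field_simp

/-- For `m ≥ 1` and `0 ≤ θ < π`, with `λ = 2 - 2 cos θ`,
`det (D_m - λ I_m) = cos ((2m+1)θ/2) / cos (θ/2)`. -/
theorem det_Dmat_sub_smul_one (m : ℕ) (hm : 1 ≤ m) (θ : ℝ)
    (hθ0 : 0 ≤ θ) (hθπ : θ < Real.pi) :
    (Dmat m - (2 - 2 * Real.cos θ) • (1 : Matrix (Fin m) (Fin m) ℝ)).det =
      Real.cos ((2 * (m : ℝ) + 1) * θ / 2) / Real.cos (θ / 2) := by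
  have hc : Real.cos (θ / 2) ≠ 0 := by
    have h1 : -(Real.pi / 2) < θ / 2 := by
      have := Real.pi_pos; linarith
    have h2 : θ / 2 < Real.pi / 2 := by linarith
    exact ne_of_gt (Real.cos_pos_of_mem_Ioo ⟨h1, h2⟩)
  exact Mmat_det θ hc m
end

section
/- For every integer m ≥ 1, a real number λ is an eigenvalue of the matrix D_m (i.e., there exists a nonzero real vector y with D_m y = λ y) if and only if there exists an integer l with 1 ≤ l ≤ m such that λ = 2 − 2cos((2l−1)π/(2m+1)). -/

lemma Dmat_mulVec (m : ℕ) (y : Fin m → ℝ) (i : Fin m) :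
    (Dmat m).mulVec y i =
      (if (i : ℕ) = 0 then 1 else 2) * y i
        - (if h : (i : ℕ) + 1 < m then y ⟨(i : ℕ) + 1, h⟩ else 0)
        - (if h : 0 < (i : ℕ) then y ⟨(i : ℕ) - 1, by omega⟩ else 0) := by
  have hsplit : ∀ j : Fin m, Dmat m i j =
      (if i = j then (if (i : ℕ) = 0 then (1:ℝ) else 2) else 0)
        + (if (i : ℕ) + 1 = (j : ℕ) then -1 else 0)
        + (if (j : ℕ) + 1 = (i : ℕ) then -1 else 0) := by
    intro j
    simp only [Dmat, Matrix.of_apply, Fin.ext_iff]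
    split_ifs <;> first | ring1 | (exfalso; omega)
  have : (Dmat m).mulVec y i = ∑ j : Fin m, Dmat m i j * y j := rfl
  rw [this, Finset.sum_congr rfl fun j _ => by rw [hsplit j]]
  have expand : ∀ j : Fin m,
      ((if i = j then (if (i : ℕ) = 0 then (1:ℝ) else 2) else 0)
        + (if (i : ℕ) + 1 = (j : ℕ) then -1 else 0)
        + (if (j : ℕ) + 1 = (i : ℕ) then -1 else 0)) * y j
      = (if i = j then (if (i : ℕ) = 0 then (1:ℝ) else 2) * y j else 0)
        + (if (i : ℕ) + 1 = (j : ℕ) then -y j else 0)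
        + (if (j : ℕ) + 1 = (i : ℕ) then -y j else 0) := by
    intro j; split_ifs <;> ring
  rw [Finset.sum_congr rfl fun j _ => expand j]
  rw [Finset.sum_add_distrib, Finset.sum_add_distrib]
  have S1 : ∑ j : Fin m, (if i = j then (if (i : ℕ) = 0 then (1:ℝ) else 2) * y j else 0)
      = (if (i : ℕ) = 0 then (1:ℝ) else 2) * y i := by
    rw [Finset.sum_ite_eq]; simp
  have S2 : ∑ j : Fin m, (if (i : ℕ) + 1 = (j : ℕ) then -y j else 0)
      = -(if h : (i : ℕ) + 1 < m then y ⟨(i : ℕ) + 1, h⟩ else 0) := by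
    by_cases h : (i : ℕ) + 1 < m
    · rw [dif_pos h, Finset.sum_eq_single (⟨(i : ℕ) + 1, h⟩ : Fin m)]
      · simp
      · intro b _ hb
        rw [if_neg]
        intro hc
        exact hb (by simp [Fin.ext_iff, ← hc])
      · simp
    · rw [dif_neg h]
      rw [Finset.sum_eq_zero]
      · simp
      · intro b _
        rw [if_neg]
        omega
  have S3 : ∑ j : Fin m, (if (j : ℕ) + 1 = (i : ℕ) then -y j else 0)
      = -(if h : 0 < (i : ℕ) then y ⟨(i : ℕ) - 1, by omega⟩ else 0) := by
    by_cases h : 0 < (i : ℕ)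
    · rw [dif_pos h, Finset.sum_eq_single (⟨(i : ℕ) - 1, by omega⟩ : Fin m)]
      · rw [if_pos (by simp; omega)]
      · intro b _ hb
        rw [if_neg]
        intro hc
        exact hb (by simp [Fin.ext_iff]; omega)
      · simp
    · rw [dif_neg h]
      rw [Finset.sum_eq_zero]
      · simp
      · intro b _
        rw [if_neg]
        omega
  rw [S1, S2, S3]; ring

lemma Dmat_eig (m l : ℕ) (hm : 1 ≤ m) (hl1 : 1 ≤ l) (hl2 : l ≤ m) :
    ∃ y : Fin m → ℝ, y ≠ 0 ∧ (Dmat m).mulVec y =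
      (2 - 2 * Real.cos ((2 * (l : ℝ) - 1) * Real.pi / (2 * (m : ℝ) + 1))) • y := by
  have hπ := Real.pi_pos
  set θ : ℝ := (2 * (l : ℝ) - 1) * Real.pi / (2 * (m : ℝ) + 1) with hθdef
  have hml : (1:ℝ) ≤ (l:ℝ) := by exact_mod_cast hl1
  have hlm : (l:ℝ) ≤ (m:ℝ) := by exact_mod_cast hl2
  have hden : (0:ℝ) < 2 * (m:ℝ) + 1 := by positivity
  have hθpos : 0 < θ := by
    apply div_pos _ hden
    nlinarith
  have hθlt : θ < Real.pi := by
    rw [hθdef, div_lt_iff₀ hden]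
    nlinarith
  refine ⟨fun i => Real.cos ((((i : ℕ) : ℝ) + 1/2) * θ), ?_, ?_⟩
  · intro h0
    have h1 : Real.cos ((((((⟨0, hm⟩ : Fin m) : ℕ)) : ℝ) + 1/2) * θ) = 0 :=
      congrFun h0 ⟨0, hm⟩
    have h2 : (0:ℝ) < Real.cos (((((⟨0, hm⟩ : Fin m) : ℕ) : ℝ) + 1/2) * θ) := by
      apply Real.cos_pos_of_mem_Ioo
      constructor <;> simp <;> nlinarith
    linarith
  · funext i
    rw [Dmat_mulVec]
    simp only [Pi.smul_apply, smul_eq_mul]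
    have hrec : ∀ t : ℝ, Real.cos ((t + 1 + 1/2) * θ) + Real.cos ((t - 1 + 1/2) * θ)
        = 2 * Real.cos θ * Real.cos ((t + 1/2) * θ) := by
      intro t
      have e1 : (t + 1 + 1/2) * θ = (t + 1/2) * θ + θ := by ring
      have e2 : (t - 1 + 1/2) * θ = (t + 1/2) * θ - θ := by ring
      rw [e1, e2, Real.cos_add, Real.cos_sub]; ring
    have hzero : ∀ t : ℝ, t + 1 = (m:ℝ) → Real.cos ((t + 1 + 1/2) * θ) = 0 := by
      intro t ht
      have harg : (t + 1 + 1/2) * θ = (2 * ((l:ℝ) - 1) + 1) * Real.pi / 2 := by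
        rw [ht, hθdef]
        field_simp
        ring
      rw [harg, Real.cos_eq_zero_iff]
      exact ⟨(l:ℤ) - 1, by push_cast; ring⟩
    have hneg : ∀ t : ℝ, t = 0 → Real.cos ((t - 1 + 1/2) * θ) = Real.cos ((t + 1/2) * θ) := by
      intro t ht
      rw [show (t - 1 + 1/2) * θ = -((t + 1/2) * θ) by rw [ht]; ring, Real.cos_neg]
    by_cases h0 : (i : ℕ) = 0 <;> by_cases hlast : (i : ℕ) + 1 = m
    · -- m = 1 case
      rw [if_pos h0, dif_neg (by omega), dif_neg (by omega)]
      have hn0 : ((i:ℕ):ℝ) = 0 := by exact_mod_cast h0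
      have hnm : ((i:ℕ):ℝ) + 1 = (m:ℝ) := by exact_mod_cast hlast
      linear_combination -hrec ((i:ℕ):ℝ) + hzero ((i:ℕ):ℝ) hnm + hneg ((i:ℕ):ℝ) hn0
    · rw [if_pos h0, dif_pos (by omega), dif_neg (by omega)]
      have hn0 : ((i:ℕ):ℝ) = 0 := by exact_mod_cast h0
      have ec : (((i:ℕ) + 1 : ℕ) : ℝ) = ((i:ℕ):ℝ) + 1 := by push_cast; ring
      simp only [ec]
      linear_combination -hrec ((i:ℕ):ℝ) + hneg ((i:ℕ):ℝ) hn0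
    · rw [if_neg h0, dif_neg (by omega), dif_pos (by omega)]
      have hnm : ((i:ℕ):ℝ) + 1 = (m:ℝ) := by exact_mod_cast hlast
      have ec : (((i:ℕ) - 1 : ℕ) : ℝ) = ((i:ℕ):ℝ) - 1 := by
        rw [Nat.cast_sub (by omega), Nat.cast_one]
      simp only [ec]
      linear_combination -hrec ((i:ℕ):ℝ) + hzero ((i:ℕ):ℝ) hnm
    · rw [if_neg h0, dif_pos (by omega), dif_pos (by omega)]
      have ec : (((i:ℕ) + 1 : ℕ) : ℝ) = ((i:ℕ):ℝ) + 1 := by push_cast; ring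
      have ec2 : (((i:ℕ) - 1 : ℕ) : ℝ) = ((i:ℕ):ℝ) - 1 := by
        rw [Nat.cast_sub (by omega), Nat.cast_one]
      simp only [ec, ec2]
      linear_combination -hrec ((i:ℕ):ℝ)

/-- For `m ≥ 1`, a real `λ` is an eigenvalue of `D_m` iff
`λ = 2 - 2 cos ((2l-1)π/(2m+1))` for some integer `1 ≤ l ≤ m`. -/
theorem eigenvalue_Dmat_iff (m : ℕ) (hm : 1 ≤ m) (lam : ℝ) :
    (∃ y : Fin m → ℝ, y ≠ 0 ∧ (Dmat m).mulVec y = lam • y) ↔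
      ∃ l : ℕ, 1 ≤ l ∧ l ≤ m ∧
        lam = 2 - 2 * Real.cos ((2 * (l : ℝ) - 1) * Real.pi / (2 * (m : ℝ) + 1)) := by
  have hπ := Real.pi_pos
  have hden : (0:ℝ) < 2 * (m:ℝ) + 1 := by positivity
  set μ : ℕ → ℝ := fun l => 2 - 2 * Real.cos ((2 * (l : ℝ) - 1) * Real.pi / (2 * (m : ℝ) + 1))
    with hμdef
  -- θ l is in (0, π] range facts and injectivity
  have hθmem : ∀ l : ℕ, 1 ≤ l → l ≤ m →
      (2 * (l : ℝ) - 1) * Real.pi / (2 * (m : ℝ) + 1) ∈ Set.Icc 0 Real.pi := by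
    intro l h1 h2
    have c1 : (1:ℝ) ≤ (l:ℝ) := by exact_mod_cast h1
    have c2 : (l:ℝ) ≤ (m:ℝ) := by exact_mod_cast h2
    constructor
    · apply div_nonneg (by nlinarith) (le_of_lt hden)
    · rw [div_le_iff₀ hden]; nlinarith
  have hinj : ∀ l1 l2 : ℕ, 1 ≤ l1 → l1 ≤ m → 1 ≤ l2 → l2 ≤ m → μ l1 = μ l2 → l1 = l2 := by
    intro l1 l2 a1 a2 b1 b2 h
    have hc : Real.cos ((2 * (l1 : ℝ) - 1) * Real.pi / (2 * (m : ℝ) + 1))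
        = Real.cos ((2 * (l2 : ℝ) - 1) * Real.pi / (2 * (m : ℝ) + 1)) := by
      simp only [hμdef] at h; linarith
    have h3 := Real.injOn_cos (hθmem l1 a1 a2) (hθmem l2 b1 b2) hc
    rw [div_left_inj' hden.ne', mul_left_inj' hπ.ne'] at h3
    have h4 : (l1:ℝ) = l2 := by linarith
    exact_mod_cast h4
  constructor
  · rintro ⟨y, hy, hyeq⟩
    by_contra hcon
    push_neg at hcon
    -- eigenvectors for the m known eigenvalues
    have hev : ∀ k : Fin m, ∃ v : Fin m → ℝ, v ≠ 0 ∧ (Dmat m).mulVec v = μ ((k:ℕ)+1) • v := by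
      intro k
      exact Dmat_eig m ((k:ℕ)+1) hm (by omega) (by omega)
    choose v hv0 hveq using hev
    set E : Module.End ℝ (Fin m → ℝ) := (Dmat m).mulVecLin with hE
    set μf : Fin (m+1) → ℝ := Fin.cons lam (fun k => μ ((k:ℕ)+1)) with hμf
    set vf : Fin (m+1) → (Fin m → ℝ) := Fin.cons y v with hvf
    have hμinj : Function.Injective μf := by
      intro a b hab
      induction a using Fin.cases <;> induction b using Fin.cases
      · rfl
      · next k =>
          exfalso
          exact hcon ((k:ℕ)+1) (by omega) (by omega) (by simpa [hμf, hμdef] using hab)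
      · next k =>
          exfalso
          exact hcon ((k:ℕ)+1) (by omega) (by omega) (by simpa [hμf, hμdef] using hab.symm)
      · next k1 k2 =>
          have : (k1:ℕ) + 1 = (k2:ℕ) + 1 := by
            apply hinj <;> first | omega | simpa [hμf] using hab
          simp [Fin.ext_iff]; omega
    have hvec : ∀ j : Fin (m+1), E.HasEigenvector (μf j) (vf j) := by
      intro j
      induction j using Fin.cases
      · exact ⟨Module.End.mem_eigenspace_iff.2 (by simpa [hE, Matrix.mulVecLin_apply, hμf, hvf] using hyeq), by simpa [hvf] using hy⟩
      · next k =>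
          exact ⟨Module.End.mem_eigenspace_iff.2
            (by simpa [hE, Matrix.mulVecLin_apply, hμf, hvf] using hveq k),
            by simpa [hvf] using hv0 k⟩
    have hli := Module.End.eigenvectors_linearIndependent' E μf hμinj vf hvec
    have hcard := hli.fintype_card_le_finrank
    rw [Module.finrank_fin_fun] at hcard
    simp only [Fintype.card_fin] at hcard
    omega
  · rintro ⟨l, hl1, hl2, rfl⟩
    exact Dmat_eig m l hm hl1 hl2
end

section
/- Let m ≥ 1 and let y = (y_1, …, y_m) be an eigenvector of D_m with eigenvalue λ (a nonzero real vector with D_m y = λ y). Then y_i = φ_{i−1}(λ) · y_1 for every i with 1 ≤ i ≤ m. -/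
/-- `φ_j(λ)`: the determinant of the top-left `j × j` submatrix of `D_m - λ I_m`
(for any `m ≥ j`; the entries of that block do not depend on `m`).
In particular `φ_0(λ) = 1` and `φ_1(λ) = 1 - λ`. -/
noncomputable def phi (j : ℕ) (lam : ℝ) : ℝ :=
  (Matrix.of fun i k : Fin j =>
    (if i = k then (if (i : ℕ) = 0 then 1 else 2) - lam
     else if (i : ℕ) + 1 = (k : ℕ) ∨ (k : ℕ) + 1 = (i : ℕ) then -1 else 0 : ℝ)).det

noncomputable def ent (lam : ℝ) (i k : ℕ) : ℝ :=
  if i = k then (if i = 0 then 1 else 2) - lam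
  else if i + 1 = k ∨ k + 1 = i then -1 else 0

lemma phi_eq (j : ℕ) (lam : ℝ) :
    phi j lam = (Matrix.of fun i k : Fin j => ent lam i k).det := by
  unfold phi ent
  congr 1
  ext i k
  simp [Fin.ext_iff]

lemma ent_diag {i : ℕ} (lam : ℝ) (h : i ≠ 0) : ent lam i i = 2 - lam := by
  unfold ent; rw [if_pos rfl, if_neg h]

lemma ent_off {i k : ℕ} (lam : ℝ) (h1 : i ≠ k) (h2 : i + 1 = k ∨ k + 1 = i) :
    ent lam i k = -1 := by
  unfold ent; rw [if_neg h1, if_pos h2]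

lemma ent_zero {i k : ℕ} (lam : ℝ) (h1 : i ≠ k) (h2 : ¬(i + 1 = k ∨ k + 1 = i)) :
    ent lam i k = 0 := by
  unfold ent; rw [if_neg h1, if_neg h2]

lemma sum_eq_two {n : ℕ} (f : Fin n → ℝ) (a b : Fin n) (hab : a ≠ b)
    (h : ∀ c, c ≠ a → c ≠ b → f c = 0) : ∑ c, f c = f a + f b := by
  classical
  rw [← Finset.sum_subset (Finset.subset_univ {a, b})
    (fun x _ hx => by
      simp only [Finset.mem_insert, Finset.mem_singleton, not_or] at hx
      exact h x hx.1 hx.2)]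
  rw [Finset.sum_pair hab]

lemma sum_eq_one {n : ℕ} (f : Fin n → ℝ) (a : Fin n)
    (h : ∀ c, c ≠ a → f c = 0) : ∑ c, f c = f a :=
  Fintype.sum_eq_single a h

lemma succAbove_coe {n : ℕ} (p : Fin (n + 1)) (i : Fin n) :
    ((p.succAbove i : ℕ)) = if (i : ℕ) < (p : ℕ) then (i : ℕ) else (i : ℕ) + 1 := by
  rw [Fin.succAbove]
  split_ifs with h1 h2 h2 <;>
    simp_all [Fin.lt_def, Fin.coe_castSucc, Fin.val_succ]

lemma phi_zero (lam : ℝ) : phi 0 lam = 1 := Matrix.det_fin_zero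

lemma phi_one (lam : ℝ) : phi 1 lam = 1 - lam := by
  rw [phi_eq, Matrix.det_fin_one]
  simp [ent]

lemma phi_rec (n : ℕ) (lam : ℝ) :
    phi (n + 2) lam = (2 - lam) * phi (n + 1) lam - phi n lam := by
  rw [phi_eq]
  set M : Matrix (Fin (n + 2)) (Fin (n + 2)) ℝ :=
    Matrix.of fun i k : Fin (n + 2) => ent lam i k with hM
  have Mval : ∀ i k : Fin (n + 2), M i k = ent lam i k := fun _ _ => rfl
  rw [Matrix.det_succ_row M (Fin.last (n + 1))]
  have hlast : ((Fin.last (n + 1) : Fin (n + 2)) : ℕ) = n + 1 := rfl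
  rw [sum_eq_two _ (⟨n, by omega⟩ : Fin (n + 2)) (⟨n + 1, by omega⟩ : Fin (n + 2))
    (by simp [Fin.ext_iff])
    (by
      intro c hca hcb
      have hc1 : (c : ℕ) ≠ n := fun h => hca (Fin.ext h)
      have hc2 : (c : ℕ) ≠ n + 1 := fun h => hcb (Fin.ext h)
      have hcn : (c : ℕ) < n + 2 := c.isLt
      have : M (Fin.last (n + 1)) c = 0 := by
        rw [Mval, hlast]; exact ent_zero lam (by omega) (by omega)
      simp [this])]
  have hb : M (Fin.last (n + 1)) ⟨n + 1, by omega⟩ = 2 - lam := by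
    rw [Mval, hlast]
    show ent lam (n + 1) (n + 1) = 2 - lam
    exact ent_diag lam (by omega)
  have ha : M (Fin.last (n + 1)) ⟨n, by omega⟩ = -1 := by
    rw [Mval, hlast]
    show ent lam (n + 1) n = -1
    exact ent_off lam (by omega) (by omega)
  have hsub_b : (M.submatrix (Fin.last (n + 1)).succAbove
      (Fin.succAbove ⟨n + 1, by omega⟩)).det = phi (n + 1) lam := by
    rw [phi_eq]
    congr 1
    ext i k
    simp only [Matrix.submatrix_apply, Mval, Matrix.of_apply]
    have hi : (((Fin.last (n + 1)).succAbove i : ℕ)) = (i : ℕ) := by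
      rw [succAbove_coe, hlast, if_pos (by omega : (i : ℕ) < n + 1)]
    have hk : ((Fin.succAbove ⟨n + 1, by omega⟩ k : ℕ)) = (k : ℕ) := by
      rw [succAbove_coe]
      exact if_pos (k.isLt)
    rw [hi, hk]
  have hsub_a : (M.submatrix (Fin.last (n + 1)).succAbove
      (Fin.succAbove ⟨n, by omega⟩)).det = -phi n lam := by
    set N : Matrix (Fin (n + 1)) (Fin (n + 1)) ℝ :=
      M.submatrix (Fin.last (n + 1)).succAbove (Fin.succAbove ⟨n, by omega⟩) with hN
    have Nval : ∀ i k : Fin (n + 1),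
        N i k = ent lam ((Fin.last (n + 1)).succAbove i : ℕ)
          ((Fin.succAbove ⟨n, by omega⟩ k : ℕ)) := fun _ _ => rfl
    have hrow : ∀ i : Fin (n + 1), (((Fin.last (n + 1)).succAbove i : ℕ)) = (i : ℕ) := by
      intro i
      rw [succAbove_coe, hlast, if_pos (by omega : (i : ℕ) < n + 1)]
    rw [Matrix.det_succ_column N (Fin.last n)]
    have hcol_last : ((Fin.succAbove (⟨n, by omega⟩ : Fin (n + 2)) (Fin.last n) : ℕ)) = n + 1 := by
      rw [succAbove_coe]
      simp [Fin.val_last]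
    rw [sum_eq_one _ (Fin.last n)
      (by
        intro c hc
        have hc' : (c : ℕ) ≠ n := fun h => hc (Fin.ext (by simpa [Fin.val_last] using h))
        have hcn : (c : ℕ) < n + 1 := c.isLt
        have : N c (Fin.last n) = 0 := by
          rw [Nval, hrow, hcol_last]
          exact ent_zero lam (by omega) (by omega)
        simp [this])]
    have hNl : N (Fin.last n) (Fin.last n) = -1 := by
      rw [Nval, hrow, hcol_last]
      simp only [Fin.val_last]
      exact ent_off lam (by omega) (by omega)
    have hminor : (N.submatrix (Fin.last n).succAbove (Fin.last n).succAbove).det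
        = phi n lam := by
      rw [phi_eq]
      congr 1
      ext i k
      simp only [Matrix.submatrix_apply, Nval, Matrix.of_apply]
      have hi : (((Fin.last (n + 1)).succAbove ((Fin.last n).succAbove i) : ℕ)) = (i : ℕ) := by
        rw [hrow, succAbove_coe]
        simp only [Fin.val_last]
        rw [if_pos i.isLt]
      have hk : ((Fin.succAbove (⟨n, by omega⟩ : Fin (n + 2)) ((Fin.last n).succAbove k) : ℕ))
          = (k : ℕ) := by
        rw [succAbove_coe, succAbove_coe]
        simp only [Fin.val_last]
        rw [if_pos k.isLt]
        exact if_pos (by omega : (k : ℕ) < n)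
      rw [hi, hk]
    rw [hNl, hminor]
    have h2n : ((Fin.last n : ℕ) + (Fin.last n : ℕ)) = 2 * n := by
      simp [Fin.val_last]; ring
    rw [h2n]
    have : ((-1 : ℝ) ^ (2 * n)) = 1 := by rw [pow_mul]; norm_num
    rw [this]
    ring
  rw [ha, hb, hsub_a, hsub_b]
  have h1 : (((Fin.last (n + 1) : Fin (n + 2)) : ℕ) + ((⟨n, by omega⟩ : Fin (n + 2)) : ℕ))
      = 2 * n + 1 := by rw [hlast]; ring
  have h2 : (((Fin.last (n + 1) : Fin (n + 2)) : ℕ) + ((⟨n + 1, by omega⟩ : Fin (n + 2)) : ℕ))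
      = 2 * (n + 1) := by rw [hlast]; ring
  rw [h1, h2]
  have e1 : ((-1 : ℝ) ^ (2 * n + 1)) = -1 := by rw [pow_succ, pow_mul]; norm_num
  have e2 : ((-1 : ℝ) ^ (2 * (n + 1))) = 1 := by rw [pow_mul]; norm_num
  rw [e1, e2]
  ring

noncomputable def dent (i k : ℕ) : ℝ :=
  if i = k then (if i = 0 then 1 else 2)
  else if i + 1 = k ∨ k + 1 = i then -1 else 0

lemma Dmat_cast {m : ℕ} (i k : Fin m) : Dmat m i k = dent i k := by
  unfold Dmat dent
  simp [Fin.ext_iff]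

lemma dent_zero {i k : ℕ} (h1 : i ≠ k) (h2 : ¬(i + 1 = k ∨ k + 1 = i)) :
    dent i k = 0 := by
  unfold dent; rw [if_neg h1, if_neg h2]

lemma sum_eq_three {n : ℕ} (f : Fin n → ℝ) (a b c : Fin n)
    (hab : a ≠ b) (hac : a ≠ c) (hbc : b ≠ c)
    (h : ∀ d, d ≠ a → d ≠ b → d ≠ c → f d = 0) : ∑ d, f d = f a + f b + f c := by
  classical
  rw [← Finset.sum_subset (Finset.subset_univ {a, b, c})
    (fun x _ hx => by
      simp only [Finset.mem_insert, Finset.mem_singleton, not_or] at hx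
      exact h x hx.1 hx.2.1 hx.2.2)]
  rw [Finset.sum_insert (by simp [hab, hac]), Finset.sum_pair hbc, add_assoc]

/-- If `y` is an eigenvector of `D_m` (`m ≥ 1`) with eigenvalue `λ`, then
`y_i = φ_{i-1}(λ) · y_1` for every `1 ≤ i ≤ m` (here `y` is indexed by `Fin m`,
so `y ⟨0,_⟩` is `y_1` and the `i`-th entry is `y ⟨i-1,_⟩`). -/
theorem eigenvector_Dmat_entries (m : ℕ) (hm : 1 ≤ m) (lam : ℝ)
    (y : Fin m → ℝ) (hy : y ≠ 0) (heig : (Dmat m).mulVec y = lam • y) :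
    ∀ i : Fin m, y i = phi (i : ℕ) lam * y ⟨0, by omega⟩ := by
  have key : ∀ i : Fin m, ∑ j, Dmat m i j * y j = lam * y i := by
    intro i
    simpa [Matrix.mulVec, dotProduct] using congrFun heig i
  have main : ∀ k, ∀ hk : k < m, y ⟨k, hk⟩ = phi k lam * y ⟨0, by omega⟩ := by
    intro k
    induction k using Nat.strong_induction_on with
    | _ k ih =>
      intro hk
      match k, hk with
      | 0, hk => rw [phi_zero, one_mul]
      | 1, hk =>
        have h0 : (0 : ℕ) < m := by omega
        have heq := key ⟨0, h0⟩
        rw [sum_eq_two _ (⟨0, h0⟩ : Fin m) (⟨1, hk⟩ : Fin m)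
          (by simp [Fin.ext_iff])
          (by
            intro c hca hcb
            have hc1 : (c : ℕ) ≠ 0 := fun h => hca (Fin.ext h)
            have hc2 : (c : ℕ) ≠ 1 := fun h => hcb (Fin.ext h)
            rw [Dmat_cast]
            show dent 0 c * y c = 0
            rw [dent_zero (by omega) (by omega), zero_mul])] at heq
        rw [Dmat_cast, Dmat_cast] at heq
        have e1 : dent 0 ((⟨0, h0⟩ : Fin m) : ℕ) = 1 := by
          show dent 0 0 = 1
          unfold dent; norm_num
        have e2 : dent 0 ((⟨1, hk⟩ : Fin m) : ℕ) = -1 := by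
          show dent 0 1 = -1
          unfold dent; norm_num
        rw [e1, e2] at heq
        rw [phi_one]
        -- heq : 1 * y ⟨0,_⟩ + -1 * y ⟨1,_⟩ = lam * y ⟨0,_⟩
        nlinarith [heq]
      | (r + 2), hk =>
        have hr : r < m := by omega
        have hr1 : r + 1 < m := by omega
        have h0 : (0 : ℕ) < m := by omega
        have heq := key ⟨r + 1, hr1⟩
        rw [sum_eq_three _ (⟨r, hr⟩ : Fin m) (⟨r + 1, hr1⟩ : Fin m) (⟨r + 2, hk⟩ : Fin m)
          (by simp [Fin.ext_iff]) (by simp [Fin.ext_iff]) (by simp [Fin.ext_iff])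
          (by
            intro d hda hdb hdc
            have h1 : (d : ℕ) ≠ r := fun h => hda (Fin.ext h)
            have h2 : (d : ℕ) ≠ r + 1 := fun h => hdb (Fin.ext h)
            have h3 : (d : ℕ) ≠ r + 2 := fun h => hdc (Fin.ext h)
            rw [Dmat_cast]
            show dent (r + 1) d * y d = 0
            rw [dent_zero (by omega) (by omega), zero_mul])] at heq
        rw [Dmat_cast, Dmat_cast, Dmat_cast] at heq
        have e1 : dent (((⟨r + 1, hr1⟩ : Fin m) : ℕ)) (((⟨r, hr⟩ : Fin m) : ℕ)) = -1 := by
          show dent (r + 1) r = -1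
          unfold dent; rw [if_neg (by omega), if_pos (by omega)]
        have e2 : dent (((⟨r + 1, hr1⟩ : Fin m) : ℕ)) (((⟨r + 1, hr1⟩ : Fin m) : ℕ)) = 2 := by
          show dent (r + 1) (r + 1) = 2
          unfold dent; rw [if_pos rfl, if_neg (by omega)]
        have e3 : dent (((⟨r + 1, hr1⟩ : Fin m) : ℕ)) (((⟨r + 2, hk⟩ : Fin m) : ℕ)) = -1 := by
          show dent (r + 1) (r + 2) = -1
          unfold dent; rw [if_neg (by omega), if_pos (by omega)]
        rw [e1, e2, e3] at heq
        have ihr := ih r (by omega) hr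
        have ihr1 := ih (r + 1) (by omega) hr1
        have h3 : y ⟨r + 2, hk⟩ = 2 * y ⟨r + 1, hr1⟩ - y ⟨r, hr⟩ - lam * y ⟨r + 1, hr1⟩ := by
          nlinarith [heq]
        rw [h3, ihr, ihr1, phi_rec]
        ring
  intro i
  have := main i i.isLt
  simpa using this
end

section
/- In the path P_n, let S be a perfect critical vertex set whose complement S̄ = {v_{i_1}, …, v_{i_k}} (k ≥ 1) is isolated, with 1 < i_1 and i_k < n. Then there exists a real number λ that is simultaneously an eigenvalue of every principal submatrix L_{S_{i_j}→S_{i_j}} of the Laplacian L of P_n indexed by a segment S_{i_j}, j = 0, 1, …, k (each segment being nonempty). -/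
/-- The Laplacian matrix (degree matrix minus adjacency matrix) of the path graph `P_n`
on vertices `v_1, …, v_n`, where `v_i` and `v_j` are adjacent iff `|i - j| = 1`.
The vertex `v_r` corresponds to the index `⟨r - 1, _⟩ : Fin n`. -/
def pathLap (n : ℕ) : Matrix (Fin n) (Fin n) ℝ :=
  Matrix.of fun i j =>
    if i = j then ((if (i : ℕ) = 0 then 0 else 1) + (if (i : ℕ) + 1 = n then 0 else 1))
    else if (i : ℕ) + 1 = (j : ℕ) ∨ (j : ℕ) + 1 = (i : ℕ) then -1 else 0

/-- `λ` is an eigenvalue of the real square matrix `M`: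
there is a nonzero real vector `z` with `M z = λ z`. -/
def Matrix.HasRealEigenvalue {α : Type*} [Fintype α]
    (M : Matrix α α ℝ) (lam : ℝ) : Prop :=
  ∃ z : α → ℝ, z ≠ 0 ∧ M.mulVec z = lam • z

/-- The `j`-th segment (`0 ≤ j ≤ k`) of the complement of `S̄ = {v_{i_1}, …, v_{i_k}}`
in the path `P_n`, where `idx j = i_j` for `1 ≤ j ≤ k`:
`S_{i_0} = {v_1, …, v_{i_1 - 1}}`, `S_{i_j} = {v_{i_j + 1}, …, v_{i_{j+1} - 1}}`
for `1 ≤ j ≤ k - 1`, and `S_{i_k} = {v_{i_k + 1}, …, v_n}`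
(vertices are recorded 1-indexed: `v_r` is `⟨r - 1, _⟩ : Fin n`). -/
def pathSegment (n k : ℕ) (idx : ℕ → ℕ) (j : ℕ) : Finset (Fin n) :=
  Finset.univ.filter fun v =>
    (if j = 0 then 1 else idx j + 1) ≤ (v : ℕ) + 1 ∧
    (v : ℕ) + 1 ≤ (if j = k then n else idx (j + 1) - 1)

private lemma idx_two_le (k : ℕ) (idx : ℕ → ℕ)
    (hiso : ∀ j, 1 ≤ j → j < k → idx j + 2 ≤ idx (j + 1)) :
    ∀ a b, 1 ≤ a → a < b → b ≤ k → idx a + 2 ≤ idx b := by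
  intro a b ha hab hbk
  induction b with
  | zero => omega
  | succ b ih =>
    rcases Nat.lt_or_ge a b with h | h
    · have h1 := ih h (by omega)
      have h2 := hiso b (by omega) (by omega)
      omega
    · have hab' : a = b := by omega
      subst hab'
      exact hiso a ha (by omega)

/-- If `S` is a perfect critical vertex set of the path `P_n` whose complement
`S̄ = {v_{i_1}, …, v_{i_k}}` (`k ≥ 1`, `1 < i_1`, `i_k < n`) is isolated, then the principal
submatrices of the Laplacian of `P_n` indexed by the segments `S_{i_0}, …, S_{i_k}`
have a common eigenvalue. -/
theorem path_pcvs_segments_common_eigenvalue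
    (n k : ℕ) (idx : ℕ → ℕ) (hk : 1 ≤ k)
    (hfirst : 1 < idx 1) (hlast : idx k < n)
    (hiso : ∀ j, 1 ≤ j → j < k → idx j + 2 ≤ idx (j + 1))
    (S : Set (Fin n))
    (hS : ∀ v : Fin n, v ∈ S ↔ ¬ ∃ j, 1 ≤ j ∧ j ≤ k ∧ idx j = (v : ℕ) + 1)
    (lam0 : ℝ) (y : Fin n → ℝ) (hy : y ≠ 0)
    (heig : (pathLap n).mulVec y = lam0 • y)
    (hzero : ∀ v : Fin n, v ∉ S → y v = 0)
    (hnonzero : ∀ v : Fin n, v ∈ S → y v ≠ 0) :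
    ∃ lam : ℝ, ∀ j, j ≤ k →
      Matrix.HasRealEigenvalue
        ((pathLap n).submatrix
          (Subtype.val : {v // v ∈ pathSegment n k idx j} → Fin n)
          (Subtype.val : {v // v ∈ pathSegment n k idx j} → Fin n)) lam := by
  refine ⟨lam0, fun j hj => ?_⟩
  have hmono := idx_two_le k idx hiso
  have hle : ∀ a b, 1 ≤ a → a ≤ b → b ≤ k → idx a ≤ idx b := by
    intro a b ha hab hbk
    rcases Nat.eq_or_lt_of_le hab with h | h
    · subst h; exact le_rfl
    · have := hmono a b ha h hbk; omega
  have hbound : ∀ j', 1 ≤ j' → j' ≤ k → 2 ≤ idx j' ∧ idx j' < n := by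
    intro j' h1 h2
    have ha := hle 1 j' le_rfl h1 h2
    have hb := hle j' k h1 h2 le_rfl
    omega
  have hmem : ∀ v : Fin n, v ∈ pathSegment n k idx j ↔
      ((if j = 0 then 1 else idx j + 1) ≤ (v : ℕ) + 1 ∧
       (v : ℕ) + 1 ≤ (if j = k then n else idx (j + 1) - 1)) := by
    intro v; simp [pathSegment]
  have hS' : ∀ r : Fin n, (∃ j', 1 ≤ j' ∧ j' ≤ k ∧ idx j' = (r : ℕ) + 1) → y r = 0 :=
    fun r h => hzero r (fun hrS => ((hS r).mp hrS) h)
  -- every segment vertex is in S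
  have hseg_S : ∀ v : Fin n, v ∈ pathSegment n k idx j → v ∈ S := by
    intro v hv
    rw [hmem] at hv
    rcases hv with ⟨hv1, hv2⟩
    rw [hS]
    rintro ⟨j', h1, h2, h3⟩
    have hb := hbound j' h1 h2
    rcases le_or_gt j' j with hle' | hlt'
    · have hj1 : 1 ≤ j := le_trans h1 hle'
      have hij : idx j' ≤ idx j := hle j' j h1 hle' hj
      rw [if_neg (by omega : ¬ j = 0)] at hv1
      omega
    · have hjk : ¬ j = k := by omega
      have hij : idx (j + 1) ≤ idx j' := hle (j + 1) j' (by omega) hlt' h2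
      have hb2 := hbound (j + 1) (by omega) (by omega)
      rw [if_neg hjk] at hv2
      omega
  -- key: entries out of segment contribute nothing
  have key : ∀ v w : Fin n, v ∈ pathSegment n k idx j → w ∉ pathSegment n k idx j →
      pathLap n v w * y w = 0 := by
    intro v w hv hw
    have hne : v ≠ w := fun h => hw (h ▸ hv)
    rw [hmem] at hv hw
    rcases hv with ⟨hv1, hv2⟩
    simp only [pathLap, Matrix.of_apply, if_neg hne]
    by_cases hadj : (v : ℕ) + 1 = (w : ℕ) ∨ (w : ℕ) + 1 = (v : ℕ)
    · rw [if_pos hadj]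
      have hwn : (w : ℕ) < n := w.isLt
      have hy0 : y w = 0 := by
        rcases hadj with hR | hL
        · -- w is right neighbor of v
          have hlo : (if j = 0 then 1 else idx j + 1) ≤ (w : ℕ) + 1 := by omega
          have hub : ¬ ((w : ℕ) + 1 ≤ (if j = k then n else idx (j + 1) - 1)) :=
            fun h => hw ⟨hlo, h⟩
          by_cases hjk : j = k
          · rw [if_pos hjk] at hub; omega
          · rw [if_neg hjk] at hub hv2
            have hb2 := hbound (j + 1) (by omega) (by omega)
            exact hS' w ⟨j + 1, by omega, by omega, by omega⟩
        · -- w is left neighbor of v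
          have hub : (w : ℕ) + 1 ≤ (if j = k then n else idx (j + 1) - 1) := by omega
          have hlo : ¬ ((if j = 0 then 1 else idx j + 1) ≤ (w : ℕ) + 1) :=
            fun h => hw ⟨h, hub⟩
          by_cases hj0 : j = 0
          · rw [if_pos hj0] at hlo; omega
          · rw [if_neg hj0] at hlo hv1
            exact hS' w ⟨j, by omega, hj, by omega⟩
      rw [hy0, mul_zero]
    · rw [if_neg hadj, zero_mul]
  refine ⟨fun w => y w.1, ?_, ?_⟩
  · -- nonzero: a witness vertex in the segment
    intro hz0
    have hzap : ∀ (x : Fin n), x ∈ pathSegment n k idx j → y x = 0 :=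
      fun x hx => congrFun hz0 ⟨x, hx⟩
    by_cases hj0 : j = 0
    · have hn0 : 0 < n := by have := hbound 1 le_rfl hk; omega
      have hx : (⟨0, hn0⟩ : Fin n) ∈ pathSegment n k idx j := by
        rw [hmem, if_pos hj0]
        refine ⟨by omega, ?_⟩
        have hjk : ¬ j = k := by omega
        rw [if_neg hjk]
        have hb2 := hbound (j + 1) (by omega) (by omega)
        have h12 : idx (j + 1) = idx 1 := by rw [hj0]
        simp only [Fin.val_mk]
        omega
      exact hnonzero _ (hseg_S _ hx) (hzap _ hx)
    · have hb := hbound j (by omega) hj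
      have hx : (⟨idx j, hb.2⟩ : Fin n) ∈ pathSegment n k idx j := by
        rw [hmem, if_neg hj0]
        refine ⟨by simp, ?_⟩
        by_cases hjk : j = k
        · rw [if_pos hjk]; simp only [Fin.val_mk]; omega
        · rw [if_neg hjk]
          have h2 := hiso j (by omega) (by omega)
          simp only [Fin.val_mk]; omega
      exact hnonzero _ (hseg_S _ hx) (hzap _ hx)
  · -- eigen equation
    funext v
    have h1 : ((pathLap n).submatrix
        (Subtype.val : {x // x ∈ pathSegment n k idx j} → Fin n)
        (Subtype.val : {x // x ∈ pathSegment n k idx j} → Fin n)).mulVec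
        (fun w => y w.1) v
        = ∑ w : {x // x ∈ pathSegment n k idx j}, pathLap n v.1 w.1 * y w.1 := by
      simp [Matrix.mulVec, dotProduct]
    rw [h1]
    rw [Finset.sum_coe_sort (pathSegment n k idx j)
      (fun w : Fin n => pathLap n (v : Fin n) w * y w)]
    rw [Finset.sum_subset (Finset.subset_univ _)
      (fun w _ hw => key v.1 w v.2 hw)]
    have h2 := congrFun heig v.1
    simpa [Matrix.mulVec, dotProduct] using h2
end

section
/- In the path P_n, let S be a perfect critical vertex set whose complement S̄ = {v_{i_1}, …, v_{i_k}} (k ≥ 1) is isolated, with 1 < i_1 and i_k < n. Then (i) the first and last segments have equal size: i_1 − 1 = n − i_k; and (ii) all interior segments have equal size: i_2 − i_1 = i_3 − i_2 = ⋯ = i_k − i_{k−1}. -/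
/-- Chebyshev-like sequence: S 0 = 0, S 1 = 1, S (m+2) = c S(m+1) - S m. -/
def chebN (c : ℝ) : ℕ → ℝ
  | 0 => 0
  | 1 => 1
  | (m+2) => c * chebN c (m+1) - chebN c m

/-- Zero-extension of a vector on `Fin n` to `ℤ`. -/
def zext (n : ℕ) (y : Fin n → ℝ) : ℤ → ℝ := fun w =>
  if h : 0 ≤ w ∧ w < (n : ℤ) then y ⟨w.toNat, by omega⟩ else 0

/-- Reflection extension: even about `-1/2` and about `n - 1/2`. -/
def refl2 (n : ℕ) (f : ℤ → ℝ) : ℤ → ℝ := fun v =>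
  if v < 0 then f (-1-v) else if v < (n:ℤ) then f v else f (2*n-1-v)

lemma zext_eq (n : ℕ) (y : Fin n → ℝ) (w : ℤ) (m : ℕ) (h1 : w = m) (h2 : m < n) :
    zext n y w = y ⟨m, h2⟩ := by
  subst h1
  have h : (0:ℤ) ≤ (m:ℤ) ∧ (m:ℤ) < (n:ℤ) := by omega
  simp only [zext, dif_pos h, Int.toNat_natCast]

lemma refl2_eq (n : ℕ) (f : ℤ → ℝ) (v : ℤ) (h1 : 0 ≤ v) (h2 : v < n) :
    refl2 n f v = f v := by
  simp only [refl2, if_neg (by omega : ¬ v < 0), if_pos h2]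

lemma refl2_symL (n : ℕ) (f : ℤ → ℝ) (u : ℤ) (h1 : -(n:ℤ) ≤ u) (h2 : u < n) :
    refl2 n f (-1-u) = refl2 n f u := by
  rcases le_or_gt 0 u with h | h
  · simp only [refl2, if_pos (by omega : -1-u < 0), if_neg (by omega : ¬ u < 0), if_pos h2]
    ring_nf
  · simp only [refl2, if_neg (by omega : ¬ -1-u < 0), if_pos (by omega : -1-u < (n:ℤ)),
      if_pos h]

lemma refl2_symR (n : ℕ) (f : ℤ → ℝ) (u : ℤ) (h1 : 0 ≤ u) (h2 : u ≤ 2*n-1) :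
    refl2 n f (2*n-1-u) = refl2 n f u := by
  rcases lt_or_ge u (n:ℤ) with h | h
  · simp only [refl2, if_neg (by omega : ¬ (2*(n:ℤ)-1-u) < 0),
      if_neg (by omega : ¬ (2*(n:ℤ)-1-u) < (n:ℤ)), if_neg (by omega : ¬ u < 0), if_pos h]
    ring_nf
  · simp only [refl2, if_neg (by omega : ¬ (2*(n:ℤ)-1-u) < 0),
      if_pos (by omega : (2*(n:ℤ)-1-u) < (n:ℤ)), if_neg (by omega : ¬ u < 0),
      if_neg (by omega : ¬ u < (n:ℤ))]

/-- The reflected sequence satisfies the three-term recurrence throughout the window,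
given the boundary and interior equations for `f` on `[0, n)`. -/
lemma refl2_rec (n : ℕ) (hn : 3 ≤ n) (c : ℝ) (f : ℤ → ℝ)
    (h0 : f 1 = (c-1) * f 0)
    (hInt : ∀ w : ℤ, 1 ≤ w → w ≤ (n:ℤ)-2 → f (w+1) = c * f w - f (w-1))
    (hN : f ((n:ℤ)-2) = (c-1) * f ((n:ℤ)-1)) :
    ∀ v : ℤ, -(n:ℤ) < v → v < 2*(n:ℤ)-1 →
      refl2 n f (v+1) = c * refl2 n f v - refl2 n f (v-1) := by
  have hYE : ∀ w : ℤ, 0 ≤ w → w < (n:ℤ) →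
      refl2 n f (w+1) = c * refl2 n f w - refl2 n f (w-1) := by
    intro w hw0 hwn
    rcases eq_or_lt_of_le hw0 with h0w | h0w
    · -- w = 0
      have hw : w = 0 := h0w.symm
      subst hw
      rw [show (0:ℤ)+1 = 1 by norm_num, show (0:ℤ)-1 = -1 by norm_num,
        refl2_eq n f 1 (by omega) (by omega), refl2_eq n f 0 (by omega) (by omega)]
      have : refl2 n f (-1) = f 0 := by
        simp only [refl2, if_pos (by omega : (-1:ℤ) < 0)]
        norm_num
      rw [this, h0]
      ring
    · rcases eq_or_lt_of_le (by omega : w ≤ (n:ℤ)-1) with hwN | hwN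
      · -- w = n-1
        have : refl2 n f (w+1) = f ((n:ℤ)-1) := by
          simp only [refl2, if_neg (by omega : ¬ w+1 < 0), if_neg (by omega : ¬ w+1 < (n:ℤ))]
          rw [show 2*(n:ℤ)-1-(w+1) = (n:ℤ)-1 by omega]
        rw [this, refl2_eq n f w (by omega) (by omega),
          refl2_eq n f (w-1) (by omega) (by omega), show w = (n:ℤ)-1 from hwN,
          show (n:ℤ)-1-1 = (n:ℤ)-2 by ring, hN]
        ring
      · -- interior
        rw [refl2_eq n f (w+1) (by omega) (by omega), refl2_eq n f w (by omega) (by omega),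
          refl2_eq n f (w-1) (by omega) (by omega)]
        exact hInt w (by omega) (by omega)
  intro v hv1 hv2
  rcases lt_or_ge v 0 with hv | hv
  · -- left reflected region
    have e1 : refl2 n f (v+1) = refl2 n f (-1-(v+1)) :=
      (refl2_symL n f (v+1) (by omega) (by omega)).symm
    have e2 : refl2 n f v = refl2 n f (-1-v) := (refl2_symL n f v (by omega) (by omega)).symm
    have e3 : refl2 n f (v-1) = refl2 n f (-1-(v-1)) :=
      (refl2_symL n f (v-1) (by omega) (by omega)).symm
    rw [e1, e2, e3]
    have := hYE (-1-v) (by omega) (by omega)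
    rw [show (-1-(v+1)) = (-1-v) - 1 by ring, show (-1-(v-1)) = (-1-v) + 1 by ring]
    linarith [this]
  · rcases lt_or_ge v (n:ℤ) with hv' | hv'
    · exact hYE v hv hv'
    · -- right reflected region
      have e1 : refl2 n f (v+1) = refl2 n f (2*(n:ℤ)-1-(v+1)) := by
        rw [refl2_symR n f (v+1) (by omega) (by omega)]
      have e2 : refl2 n f v = refl2 n f (2*(n:ℤ)-1-v) := by
        rw [refl2_symR n f v (by omega) (by omega)]
      have e3 : refl2 n f (v-1) = refl2 n f (2*(n:ℤ)-1-(v-1)) := by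
        rw [refl2_symR n f (v-1) (by omega) (by omega)]
      rw [e1, e2, e3]
      have := hYE (2*(n:ℤ)-1-v) (by omega) (by omega)
      rw [show (2*(n:ℤ)-1-(v+1)) = (2*(n:ℤ)-1-v) - 1 by ring,
        show (2*(n:ℤ)-1-(v-1)) = (2*(n:ℤ)-1-v) + 1 by ring]
      linarith [this]

/-- Propagation: a solution of the recurrence vanishing at `a` is a multiple of `chebN`. -/
lemma cheb_prop (c : ℝ) (f : ℤ → ℝ) (a : ℤ) (m : ℕ)
    (h0 : f a = 0)
    (hrec : ∀ v : ℤ, a < v → v < a + m → f (v+1) = c * f v - f (v-1)) :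
    ∀ t : ℕ, t ≤ m → f (a + t) = f (a+1) * chebN c t := by
  intro t
  induction t using Nat.strong_induction_on with
  | _ t ih =>
    match t with
    | 0 => intro _; simpa [chebN] using h0
    | 1 => intro _; simp [chebN]
    | (t+2) =>
      intro ht
      have h1 := ih (t+1) (by omega) (by omega)
      have h2 := ih t (by omega) (by omega)
      have hr := hrec (a + (t+1 : ℕ)) (by push_cast; omega) (by push_cast; omega)
      have e1 : a + ((t:ℕ)+2 : ℕ) = (a + ((t:ℕ)+1 : ℕ)) + 1 := by push_cast; ring
      have e2 : (a + ((t:ℕ)+1 : ℕ)) - 1 = a + (t:ℕ) := by push_cast; ring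
      rw [e1, hr, e2, h1, h2, show chebN c (t+2) = c * chebN c (t+1) - chebN c t from rfl]
      ring

lemma gap_le (c : ℝ) (f : ℤ → ℝ) (a b : ℤ) (g1 g2 : ℕ)
    (hg2 : 1 ≤ g2)
    (ha0 : f a = 0)
    (harec : ∀ v : ℤ, a < v → v < a + g1 → f (v+1) = c * f v - f (v-1))
    (habet : ∀ t : ℕ, 0 < t → t < g1 → f (a + t) ≠ 0)
    (hb0 : f b = 0)
    (hb1 : f (b+1) ≠ 0)
    (hbrec : ∀ v : ℤ, b < v → v < b + g2 → f (v+1) = c * f v - f (v-1))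
    (hbg : f (b + g2) = 0) :
    g1 ≤ g2 := by
  by_contra hcon
  push_neg at hcon
  have hch : chebN c g2 = 0 := by
    have h := cheb_prop c f b g2 hb0 hbrec g2 le_rfl
    rw [hbg] at h
    rcases mul_eq_zero.mp h.symm with h' | h'
    · exact absurd h' hb1
    · exact h'
  have h := cheb_prop c f a g1 ha0 harec g2 (le_of_lt hcon)
  exact habet g2 hg2 hcon (by rw [h, hch, mul_zero])

lemma gap_eq (c : ℝ) (f : ℤ → ℝ) (a b : ℤ) (g1 g2 : ℕ)
    (hg1 : 1 ≤ g1) (hg2 : 1 ≤ g2)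
    (ha0 : f a = 0) (ha1 : f (a+1) ≠ 0)
    (harec : ∀ v : ℤ, a < v → v < a + g1 → f (v+1) = c * f v - f (v-1))
    (hag : f (a + g1) = 0)
    (habet : ∀ t : ℕ, 0 < t → t < g1 → f (a + t) ≠ 0)
    (hb0 : f b = 0) (hb1 : f (b+1) ≠ 0)
    (hbrec : ∀ v : ℤ, b < v → v < b + g2 → f (v+1) = c * f v - f (v-1))
    (hbg : f (b + g2) = 0)
    (hbbet : ∀ t : ℕ, 0 < t → t < g2 → f (b + t) ≠ 0) :
    g1 = g2 :=
  le_antisymm (gap_le c f a b g1 g2 hg2 ha0 harec habet hb0 hb1 hbrec hbg)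
    (gap_le c f b a g2 g1 hg1 hb0 hbrec hbbet ha0 ha1 harec hag)

lemma pathLap_mulVec (n : ℕ) (y : Fin n → ℝ) (i : Fin n) :
    (pathLap n).mulVec y i =
      ((if (i : ℕ) = 0 then 0 else 1) + (if (i : ℕ) + 1 = n then 0 else 1)) * y i
      - (if h : (i : ℕ) + 1 < n then y ⟨(i : ℕ) + 1, h⟩ else 0)
      - (if h : 0 < (i : ℕ) then y ⟨(i : ℕ) - 1, (Nat.sub_le _ _).trans_lt i.isLt⟩ else 0) := by
  classical
  have hsplit : ∀ j : Fin n, pathLap n i j * y j =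
      (if j = i then ((if (i:ℕ)=0 then (0:ℝ) else 1)+(if (i:ℕ)+1=n then 0 else 1)) * y j else 0)
      + (if (i:ℕ)+1 = (j:ℕ) then -y j else 0)
      + (if (j:ℕ)+1 = (i:ℕ) then -y j else 0) := by
    intro j
    by_cases h1 : j = i
    · subst h1
      have h2 : ¬ ((j:ℕ)+1 = (j:ℕ)) := by omega
      simp [pathLap, h2]
    · have h1' : i ≠ j := fun h => h1 h.symm
      have h1v : (i:ℕ) ≠ (j:ℕ) := fun h => h1' (Fin.ext h)
      rw [pathLap]
      simp only [Matrix.of_apply, if_neg h1', if_neg h1]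
      by_cases h2 : (i:ℕ)+1 = (j:ℕ)
      · have h3 : ¬ ((j:ℕ)+1 = (i:ℕ)) := by omega
        simp [h2, h3]
      · by_cases h3 : (j:ℕ)+1 = (i:ℕ)
        · simp [h2, h3]
        · simp [h2, h3]
  unfold Matrix.mulVec dotProduct
  simp only [hsplit, Finset.sum_add_distrib]
  have s1 : (∑ j : Fin n, if j = i then
      ((if (i:ℕ)=0 then (0:ℝ) else 1)+(if (i:ℕ)+1=n then 0 else 1)) * y j else 0)
      = ((if (i:ℕ)=0 then (0:ℝ) else 1)+(if (i:ℕ)+1=n then 0 else 1)) * y i := by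
    rw [Finset.sum_ite_eq' Finset.univ i]
    simp
  have s2 : (∑ j : Fin n, if (i:ℕ)+1 = (j:ℕ) then -y j else 0)
      = - (if h : (i : ℕ) + 1 < n then y ⟨(i : ℕ) + 1, h⟩ else 0) := by
    by_cases h : (i:ℕ)+1 < n
    · have : ∀ j : Fin n, ((i:ℕ)+1 = (j:ℕ)) = (j = (⟨(i:ℕ)+1, h⟩ : Fin n)) := by
        intro j
        apply propext
        constructor
        · intro hh; exact Fin.ext hh.symm
        · intro hh; rw [hh]
      simp only [this]
      rw [Finset.sum_ite_eq' Finset.univ, dif_pos h]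
      simp
    · have : ∀ j : Fin n, ¬ ((i:ℕ)+1 = (j:ℕ)) := by
        intro j hh
        exact h (hh ▸ j.isLt)
      simp only [if_neg (this _)]
      rw [dif_neg h]
      simp
  have s3 : (∑ j : Fin n, if (j:ℕ)+1 = (i:ℕ) then -y j else 0)
      = - (if h : 0 < (i : ℕ) then y ⟨(i : ℕ) - 1, (Nat.sub_le _ _).trans_lt i.isLt⟩ else 0) := by
    by_cases h : 0 < (i:ℕ)
    · have hlt : (i:ℕ) - 1 < n := (Nat.sub_le _ _).trans_lt i.isLt
      have : ∀ j : Fin n, ((j:ℕ)+1 = (i:ℕ)) = (j = (⟨(i:ℕ)-1, hlt⟩ : Fin n)) := by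
        intro j
        apply propext
        constructor
        · intro hh; exact Fin.ext (by simp; omega)
        · intro hh; rw [hh]; simp; omega
      simp only [this]
      rw [Finset.sum_ite_eq' Finset.univ, dif_pos h]
      simp
    · have : ∀ j : Fin n, ¬ ((j:ℕ)+1 = (i:ℕ)) := by
        intro j hh
        omega
      simp only [if_neg (this _)]
      rw [dif_neg h]
      simp
  rw [s1, s2, s3]
  ring

/-- If `S` is a perfect critical vertex set of the path `P_n` whose complement
`S̄ = {v_{i_1}, …, v_{i_k}}` (`k ≥ 1`, `1 < i_1`, `i_k < n`) is isolated, then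
(i) the first and last segments have equal size: `i_1 - 1 = n - i_k`; and
(ii) all interior segments have equal size:
`i_2 - i_1 = i_3 - i_2 = ⋯ = i_k - i_{k-1}`. -/
theorem path_pcvs_segment_sizes
    (n k : ℕ) (idx : ℕ → ℕ) (hk : 1 ≤ k)
    (hfirst : 1 < idx 1) (hlast : idx k < n)
    (hiso : ∀ j, 1 ≤ j → j < k → idx j + 2 ≤ idx (j + 1))
    (S : Set (Fin n))
    (hS : ∀ v : Fin n, v ∈ S ↔ ¬ ∃ j, 1 ≤ j ∧ j ≤ k ∧ idx j = (v : ℕ) + 1)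
    (lam0 : ℝ) (y : Fin n → ℝ) (hy : y ≠ 0)
    (heig : (pathLap n).mulVec y = lam0 • y)
    (hzero : ∀ v : Fin n, v ∉ S → y v = 0)
    (hnonzero : ∀ v : Fin n, v ∈ S → y v ≠ 0) :
    idx 1 - 1 = n - idx k ∧
    ∀ j j', 1 ≤ j → j < k → 1 ≤ j' → j' < k →
      idx (j + 1) - idx j = idx (j' + 1) - idx j' := by
  classical
  -- monotonicity
  have hmono : ∀ j j', 1 ≤ j → j ≤ j' → j' ≤ k → idx j + 2*(j'-j) ≤ idx j' := by
    intro j j' hj hle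
    induction j', hle using Nat.le_induction with
    | base => intro _; omega
    | succ m hm ih =>
      intro hmk
      have h1 := ih (by omega)
      have h2 := hiso m (by omega) (by omega)
      omega
  have hidx1 : 2 ≤ idx 1 := hfirst
  have hik : idx 1 ≤ idx k := by have := hmono 1 k le_rfl hk le_rfl; omega
  have hn3 : 3 ≤ n := by omega
  -- zero characterization of y
  have hyz : ∀ (m : ℕ) (h : m < n), (y ⟨m, h⟩ = 0 ↔ ∃ j, 1 ≤ j ∧ j ≤ k ∧ idx j = m + 1) := by
    intro m h
    constructor
    · intro h0
      by_contra hc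
      exact hnonzero _ ((hS _).mpr hc) h0
    · intro hex
      exact hzero _ (fun hmem => (hS _).mp hmem hex)
  set f := zext n y with hf
  set Y := refl2 n f with hY
  set c : ℝ := 2 - lam0 with hc
  -- scalar eigen-equations
  have hrow : ∀ i : Fin n,
      ((if (i : ℕ) = 0 then (0:ℝ) else 1) + (if (i : ℕ) + 1 = n then 0 else 1)) * y i
      - (if h : (i : ℕ) + 1 < n then y ⟨(i : ℕ) + 1, h⟩ else 0)
      - (if h : 0 < (i : ℕ) then y ⟨(i : ℕ) - 1, (Nat.sub_le _ _).trans_lt i.isLt⟩ else 0)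
      = lam0 * y i := by
    intro i
    have h := congrFun heig i
    rw [pathLap_mulVec] at h
    simpa using h
  have h0 : f 1 = (c-1) * f 0 := by
    have h : ((if (0:ℕ) = 0 then (0:ℝ) else 1) + (if (0:ℕ) + 1 = n then 0 else 1)) * y ⟨0, by omega⟩
        - (if h : (0:ℕ) + 1 < n then y ⟨(0:ℕ) + 1, h⟩ else 0)
        - (if h : 0 < (0:ℕ) then y ⟨(0:ℕ) - 1, by omega⟩ else 0)
        = lam0 * y ⟨0, by omega⟩ := hrow ⟨0, by omega⟩
    rw [if_pos rfl, if_neg (by omega : ¬ (0:ℕ)+1 = n), dif_pos (by omega : (0:ℕ)+1 < n),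
      dif_neg (by omega : ¬ 0 < (0:ℕ))] at h
    rw [hf]
    rw [zext_eq n y 1 1 rfl (by omega), zext_eq n y 0 0 rfl (by omega)]
    have h1 : y ⟨1, by omega⟩ = y ⟨0+1, by omega⟩ := rfl
    rw [hc]
    rw [h1]
    linarith [h]
  have hInt : ∀ w : ℤ, 1 ≤ w → w ≤ (n:ℤ)-2 → f (w+1) = c * f w - f (w-1) := by
    intro w hw1 hw2
    obtain ⟨m, rfl⟩ : ∃ m : ℕ, w = (m:ℤ) := ⟨w.toNat, by omega⟩
    have hm1 : 1 ≤ m := by omega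
    have hm2 : m + 1 < n := by omega
    have h : ((if m = 0 then (0:ℝ) else 1) + (if m + 1 = n then 0 else 1)) * y ⟨m, by omega⟩
        - (if h : m + 1 < n then y ⟨m + 1, h⟩ else 0)
        - (if h : 0 < m then y ⟨m - 1, by omega⟩ else 0)
        = lam0 * y ⟨m, by omega⟩ := hrow ⟨m, by omega⟩
    rw [if_neg (by omega : ¬ m = 0), if_neg (by omega : ¬ m+1 = n), dif_pos hm2,
      dif_pos (by omega : 0 < m)] at h
    rw [hf]
    rw [zext_eq n y ((m:ℤ)+1) (m+1) (by omega) hm2, zext_eq n y (m:ℤ) m rfl (by omega),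
      zext_eq n y ((m:ℤ)-1) (m-1) (by omega) (by omega)]
    rw [hc]
    linarith [h]
  have hN : f ((n:ℤ)-2) = (c-1) * f ((n:ℤ)-1) := by
    have h : ((if n-1 = 0 then (0:ℝ) else 1) + (if (n-1) + 1 = n then 0 else 1)) * y ⟨n-1, by omega⟩
        - (if h : (n-1) + 1 < n then y ⟨(n-1) + 1, h⟩ else 0)
        - (if h : 0 < n-1 then y ⟨(n-1) - 1, by omega⟩ else 0)
        = lam0 * y ⟨n-1, by omega⟩ := hrow ⟨n-1, by omega⟩
    rw [if_neg (by omega : ¬ n-1 = 0), if_pos (by omega : (n-1)+1 = n),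
      dif_neg (by omega : ¬ (n-1)+1 < n), dif_pos (by omega : 0 < n-1)] at h
    rw [hf]
    rw [zext_eq n y ((n:ℤ)-2) (n-2) (by omega) (by omega),
      zext_eq n y ((n:ℤ)-1) (n-1) (by omega) (by omega)]
    have e : y ⟨n-1-1, by omega⟩ = y ⟨n-2, by omega⟩ := by congr 1
    rw [e] at h
    rw [hc]
    linarith [h]
  have hrecY : ∀ v : ℤ, -(n:ℤ) < v → v < 2*(n:ℤ)-1 → Y (v+1) = c * Y v - Y (v-1) := by
    intro v h1 h2
    rw [hY]
    exact refl2_rec n hn3 c f h0 hInt hN v h1 h2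
  -- value/symmetry wrappers
  have hYval : ∀ (m : ℕ) (h : m < n), Y (m:ℤ) = y ⟨m, h⟩ := by
    intro m h
    rw [hY, refl2_eq n f (m:ℤ) (by omega) (by omega), hf, zext_eq n y (m:ℤ) m rfl h]
  have symL : ∀ u : ℤ, -(n:ℤ) ≤ u → u < n → Y (-1-u) = Y u := by
    intro u h1 h2; rw [hY]; exact refl2_symL n f u h1 h2
  have symR : ∀ u : ℤ, 0 ≤ u → u ≤ 2*(n:ℤ)-1 → Y (2*(n:ℤ)-1-u) = Y u := by
    intro u h1 h2
    rw [hY]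
    have := refl2_symR n f u h1 (by push_cast; omega)
    rw [show ((2*n-1 : ℤ)) = 2*(n:ℤ)-1 by push_cast; ring] at this
    exact this
  have hYz : ∀ (m : ℕ) (h : m < n), (Y (m:ℤ) = 0 ↔ ∃ j, 1 ≤ j ∧ j ≤ k ∧ idx j = m + 1) := by
    intro m h; rw [hYval m h]; exact hyz m h
  have hnz : ∀ (m : ℕ), m < n → (∀ j, 1 ≤ j → j ≤ k → idx j ≠ m + 1) → Y (m:ℤ) ≠ 0 := by
    intro m hm hj h0
    obtain ⟨j, hj1, hjk, hje⟩ := (hYz m hm).mp h0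
    exact hj j hj1 hjk hje
  have hz : ∀ j, 1 ≤ j → j ≤ k → Y ((idx j : ℤ) - 1) = 0 := by
    intro j h1 h2
    have e1 := hmono 1 j le_rfl h1 h2
    have e2 := hmono j k h1 h2 le_rfl
    obtain ⟨m, hm⟩ : ∃ m : ℕ, (idx j : ℤ) - 1 = m := ⟨idx j - 1, by omega⟩
    rw [hm]
    exact (hYz m (by omega)).mpr ⟨j, h1, h2, by omega⟩
  -- common window-recurrence helper
  have hrecW : ∀ (a : ℤ) (g : ℕ), -(n:ℤ) ≤ a → a + (g:ℤ) ≤ 2*(n:ℤ)-1 →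
      ∀ v : ℤ, a < v → v < a + (g:ℤ) → Y (v+1) = c * Y v - Y (v-1) := by
    intro a g ha hg v hv1 hv2
    exact hrecY v (by omega) (by omega)
  -- ===== pair 0 (left boundary pair) =====
  have p0 : (2 * idx 1 - 1 : ℕ) = (2*n + 1 - 2*idx k : ℕ) → idx 1 - 1 = n - idx k := by
    intro h; omega
  have e0 : -(idx 1 : ℤ) + ((2 * idx 1 - 1 : ℕ) : ℤ) = (idx 1 : ℤ) - 1 := by omega
  have ha0 : Y (-(idx 1 : ℤ)) = 0 := by
    have hs := symL ((idx 1 : ℤ) - 1) (by omega) (by omega)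
    rw [show (-1 - ((idx 1:ℤ) - 1)) = -(idx 1:ℤ) by ring] at hs
    rw [hs]
    exact hz 1 le_rfl hk
  have ha1 : Y (-(idx 1 : ℤ) + 1) ≠ 0 := by
    have hs := symL ((idx 1 : ℤ) - 2) (by omega) (by omega)
    rw [show (-1 - ((idx 1:ℤ) - 2)) = -(idx 1:ℤ) + 1 by ring] at hs
    rw [hs]
    obtain ⟨m, hm⟩ : ∃ m : ℕ, (idx 1 : ℤ) - 2 = m := ⟨idx 1 - 2, by omega⟩
    rw [hm]
    apply hnz m (by omega)
    intro j hj1 hjk hje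
    have := hmono 1 j le_rfl hj1 hjk
    omega
  have habet : ∀ t : ℕ, 0 < t → t < 2 * idx 1 - 1 → Y (-(idx 1:ℤ) + t) ≠ 0 := by
    intro t ht1 ht2
    rcases le_or_gt 0 (-(idx 1:ℤ) + t) with h | h
    · obtain ⟨m, hm⟩ : ∃ m : ℕ, -(idx 1:ℤ) + t = m := ⟨(-(idx 1:ℤ) + t).toNat, by omega⟩
      rw [hm]
      apply hnz m (by omega)
      intro j hj1 hjk hje
      have := hmono 1 j le_rfl hj1 hjk
      omega
    · have hs := symL (-1 - (-(idx 1:ℤ) + t)) (by omega) (by omega)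
      rw [show (-1 - (-1 - (-(idx 1:ℤ) + t))) = -(idx 1:ℤ) + t by ring] at hs
      rw [hs]
      obtain ⟨m, hm⟩ : ∃ m : ℕ, -1 - (-(idx 1:ℤ) + t) = m := ⟨(-1 - (-(idx 1:ℤ) + t)).toNat, by omega⟩
      rw [hm]
      apply hnz m (by omega)
      intro j hj1 hjk hje
      have := hmono 1 j le_rfl hj1 hjk
      omega
  have hag : Y (-(idx 1:ℤ) + ((2 * idx 1 - 1 : ℕ) : ℤ)) = 0 := by
    rw [e0]; exact hz 1 le_rfl hk
  have harec := hrecW (-(idx 1:ℤ)) (2 * idx 1 - 1) (by omega) (by omega)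
  -- ===== pair k (right boundary pair) =====
  have ek : ((idx k : ℤ) - 1) + ((2*n + 1 - 2*idx k : ℕ) : ℤ) = 2*(n:ℤ) - (idx k : ℤ) := by omega
  have hb0 : Y ((idx k : ℤ) - 1) = 0 := hz k hk le_rfl
  have hb1 : Y ((idx k : ℤ) - 1 + 1) ≠ 0 := by
    rw [show ((idx k:ℤ) - 1 + 1) = ((idx k : ℕ) : ℤ) by ring]
    apply hnz (idx k) (by omega)
    intro j hj1 hjk hje
    have := hmono j k hj1 hjk le_rfl
    omega
  have hbbet : ∀ t : ℕ, 0 < t → t < 2*n + 1 - 2*idx k → Y ((idx k:ℤ) - 1 + t) ≠ 0 := by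
    intro t ht1 ht2
    rcases lt_or_ge ((idx k:ℤ) - 1 + t) (n:ℤ) with h | h
    · obtain ⟨m, hm⟩ : ∃ m : ℕ, (idx k:ℤ) - 1 + t = m := ⟨((idx k:ℤ) - 1 + t).toNat, by omega⟩
      rw [hm]
      apply hnz m (by omega)
      intro j hj1 hjk hje
      have := hmono j k hj1 hjk le_rfl
      omega
    · have hs := symR ((idx k:ℤ) - 1 + t) (by omega) (by omega)
      rw [← hs]
      obtain ⟨m, hm⟩ : ∃ m : ℕ, 2*(n:ℤ)-1 - ((idx k:ℤ) - 1 + t) = m :=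
        ⟨((2*(n:ℤ)-1 - ((idx k:ℤ) - 1 + t))).toNat, by omega⟩
      rw [hm]
      apply hnz m (by omega)
      intro j hj1 hjk hje
      have := hmono j k hj1 hjk le_rfl
      omega
  have hbg : Y ((idx k:ℤ) - 1 + ((2*n + 1 - 2*idx k : ℕ) : ℤ)) = 0 := by
    rw [ek]
    have hs := symR ((idx k:ℤ) - 1) (by omega) (by omega)
    rw [show (2*(n:ℤ)-1 - ((idx k:ℤ) - 1)) = 2*(n:ℤ) - (idx k:ℤ) by ring] at hs
    rw [hs]
    exact hz k hk le_rfl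
  have hbrec := hrecW ((idx k:ℤ) - 1) (2*n + 1 - 2*idx k) (by omega) (by omega)
  -- ===== interior pairs =====
  have pj : ∀ j, 1 ≤ j → j < k →
      Y ((idx j:ℤ) - 1) = 0 ∧ Y ((idx j:ℤ) - 1 + 1) ≠ 0 ∧
      (∀ v : ℤ, (idx j:ℤ) - 1 < v → v < (idx j:ℤ) - 1 + ((idx (j+1) - idx j : ℕ) : ℤ) →
        Y (v+1) = c * Y v - Y (v-1)) ∧
      Y ((idx j:ℤ) - 1 + ((idx (j+1) - idx j : ℕ) : ℤ)) = 0 ∧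
      (∀ t : ℕ, 0 < t → t < idx (j+1) - idx j → Y ((idx j:ℤ) - 1 + t) ≠ 0) := by
    intro j hj1 hjk
    have e1 := hmono 1 j le_rfl hj1 (by omega)
    have e2 := hmono (j+1) k (by omega) (by omega) le_rfl
    have e3 := hiso j hj1 hjk
    have ej : (idx j:ℤ) - 1 + ((idx (j+1) - idx j : ℕ) : ℤ) = (idx (j+1) : ℤ) - 1 := by omega
    refine ⟨hz j hj1 (by omega), ?_, ?_, ?_, ?_⟩
    · rw [show ((idx j:ℤ) - 1 + 1) = ((idx j : ℕ) : ℤ) by ring]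
      apply hnz (idx j) (by omega)
      intro j'' h1 h2 h3
      rcases le_or_gt j'' j with hcase | hcase
      · have := hmono j'' j h1 hcase (by omega); omega
      · have := hmono (j+1) j'' (by omega) hcase h2; omega
    · exact hrecW ((idx j:ℤ) - 1) (idx (j+1) - idx j) (by omega) (by omega)
    · rw [ej]; exact hz (j+1) (by omega) (by omega)
    · intro t ht1 ht2
      obtain ⟨m, hm⟩ : ∃ m : ℕ, (idx j:ℤ) - 1 + t = m := ⟨((idx j:ℤ) - 1 + t).toNat, by omega⟩
      rw [hm]
      apply hnz m (by omega)
      intro j'' h1 h2 h3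
      rcases le_or_gt j'' j with hcase | hcase
      · have := hmono j'' j h1 hcase (by omega); omega
      · have := hmono (j+1) j'' (by omega) hcase h2; omega
  constructor
  · apply p0
    exact gap_eq c Y (-(idx 1:ℤ)) ((idx k:ℤ) - 1) (2 * idx 1 - 1) (2*n + 1 - 2*idx k)
      (by omega) (by omega) ha0 ha1 harec hag habet hb0 hb1 hbrec hbg hbbet
  · intro j j' hj hjk hj' hj'k
    obtain ⟨a0', a1', arec', ag', abet'⟩ := pj j hj hjk
    obtain ⟨b0', b1', brec', bg', bbet'⟩ := pj j' hj' hj'k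
    have e3 := hiso j hj hjk
    have e3' := hiso j' hj' hj'k
    exact gap_eq c Y ((idx j:ℤ) - 1) ((idx j':ℤ) - 1) (idx (j+1) - idx j) (idx (j'+1) - idx j')
      (by omega) (by omega) a0' a1' arec' ag' abet' b0' b1' brec' bg' bbet'
end

section
/- In the path P_n, let S be a perfect critical vertex set whose complement S̄ = {v_{i_1}, …, v_{i_k}} is isolated, with 1 < i_1 and i_k < n, and suppose k ≥ 2. Then the size of the first interior segment is twice the size of the first segment: i_2 − i_1 − 1 = 2(i_1 − 1). -/
lemma pathLap_mulVec_interior (n : ℕ) (y : Fin n → ℝ) (i : Fin n)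
    (h1 : 1 ≤ (i:ℕ)) (h2 : (i:ℕ) + 1 < n) :
    (pathLap n).mulVec y i =
      2 * y i - y ⟨(i:ℕ) - 1, by omega⟩ - y ⟨(i:ℕ) + 1, h2⟩ := by
  have key : ∀ j : Fin n, pathLap n i j * y j =
      (if j = i then 2 * y j else 0) +
      ((if j = (⟨(i:ℕ) - 1, by omega⟩ : Fin n) then -1 * y j else 0) +
       (if j = (⟨(i:ℕ) + 1, h2⟩ : Fin n) then -1 * y j else 0)) := by
    intro j
    rcases eq_or_ne j i with rfl | hji
    · have hne1 : j ≠ (⟨(j:ℕ) - 1, by omega⟩ : Fin n) := by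
        intro h; have := congrArg Fin.val h; simp at this; omega
      have hne2 : j ≠ (⟨(j:ℕ) + 1, h2⟩ : Fin n) := by
        intro h; have := congrArg Fin.val h; simp at this
      have h0 : ¬ ((j:ℕ) = 0) := by omega
      have hn' : ¬ ((j:ℕ) + 1 = n) := by omega
      simp only [pathLap, Matrix.of_apply, if_pos rfl, if_neg h0, if_neg hn',
        if_neg hne1, if_neg hne2]
      norm_num [mul_comm]
    · have hij : i ≠ j := hji.symm
      by_cases hr : (i:ℕ) + 1 = (j:ℕ)
      · have hj2 : j = (⟨(i:ℕ) + 1, h2⟩ : Fin n) := Fin.ext (by simp; omega)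
        have hj1 : j ≠ (⟨(i:ℕ) - 1, by omega⟩ : Fin n) := by
          intro h; have := congrArg Fin.val h; simp at this; omega
        simp only [pathLap, Matrix.of_apply, if_neg hij, if_pos (Or.inl hr),
          if_neg hji, if_neg hj1, if_pos hj2]
        ring
      · by_cases hl : (j:ℕ) + 1 = (i:ℕ)
        · have hj1 : j = (⟨(i:ℕ) - 1, by omega⟩ : Fin n) := Fin.ext (by simp; omega)
          have hj2 : j ≠ (⟨(i:ℕ) + 1, h2⟩ : Fin n) := by
            intro h; have := congrArg Fin.val h; simp at this; omega
          simp only [pathLap, Matrix.of_apply, if_neg hij, if_pos (Or.inr hl),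
            if_neg hji, if_pos hj1, if_neg hj2]
          ring
        · have hj1 : j ≠ (⟨(i:ℕ) - 1, by omega⟩ : Fin n) := by
            intro h; have := congrArg Fin.val h; simp at this; omega
          have hj2 : j ≠ (⟨(i:ℕ) + 1, h2⟩ : Fin n) := by
            intro h; have := congrArg Fin.val h; simp at this; omega
          simp only [pathLap, Matrix.of_apply, if_neg hij, if_neg (not_or.mpr ⟨hr, hl⟩),
            if_neg hji, if_neg hj1, if_neg hj2]
          ring
  simp only [Matrix.mulVec, dotProduct]
  rw [Finset.sum_congr rfl fun j _ => key j]
  rw [Finset.sum_add_distrib, Finset.sum_add_distrib]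
  simp [Finset.sum_ite_eq']
  ring

lemma pathLap_mulVec_zero (n : ℕ) (y : Fin n → ℝ) (hn : 1 < n) :
    (pathLap n).mulVec y ⟨0, by omega⟩ = y ⟨0, by omega⟩ - y ⟨1, hn⟩ := by
  have key : ∀ j : Fin n, pathLap n ⟨0, by omega⟩ j * y j =
      (if j = (⟨0, by omega⟩ : Fin n) then y j else 0) +
      (if j = (⟨1, hn⟩ : Fin n) then -1 * y j else 0) := by
    intro j
    by_cases hj0 : j = (⟨0, by omega⟩ : Fin n)
    · have h0j : (⟨0, by omega⟩ : Fin n) = j := hj0.symm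
      have hne : j ≠ (⟨1, hn⟩ : Fin n) := by
        rw [hj0]; intro h; have := congrArg Fin.val h; simp at this
      simp only [pathLap, Matrix.of_apply, if_pos h0j, if_pos hj0, if_neg hne]
      have hnn : ¬ ((0:ℕ) + 1 = n) := by omega
      simp [hnn]
    · have h0j : (⟨0, by omega⟩ : Fin n) ≠ j := fun h => hj0 h.symm
      by_cases hj1 : j = (⟨1, hn⟩ : Fin n)
      · have hr : ((⟨0, by omega⟩ : Fin n) : ℕ) + 1 = (j:ℕ) := by
          rw [hj1]
        simp only [pathLap, Matrix.of_apply, if_neg h0j, if_pos (Or.inl hr),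
          if_neg hj0, if_pos hj1]
        ring
      · have h1 : ¬ (((⟨0, by omega⟩ : Fin n) : ℕ) + 1 = (j:ℕ)) := by
          intro h; apply hj1; exact Fin.ext (by simpa using h.symm)
        have h2 : ¬ ((j:ℕ) + 1 = ((⟨0, by omega⟩ : Fin n) : ℕ)) := by simp
        simp only [pathLap, Matrix.of_apply, if_neg h0j, if_neg (not_or.mpr ⟨h1, h2⟩),
          if_neg hj0, if_neg hj1]
        ring
  simp only [Matrix.mulVec, dotProduct]
  rw [Finset.sum_congr rfl fun j _ => key j]
  rw [Finset.sum_add_distrib]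
  simp [Finset.sum_ite_eq']
  ring


/-- Solution of `F (r+2) = t * F (r+1) - F r` with `F 0 = F 1 = u1`. -/
def Fseq (t u1 : ℝ) : ℕ → ℝ
  | 0 => u1
  | 1 => u1
  | (r + 2) => t * Fseq t u1 (r + 1) - Fseq t u1 r

/-- Extension of `Fseq` to `ℤ`, symmetric about `1/2`. -/
def Gseq (t u1 : ℝ) (z : ℤ) : ℝ :=
  if 0 ≤ z then Fseq t u1 z.toNat else Fseq t u1 (1 - z).toNat

lemma Gseq_rec (t u1 : ℝ) (z : ℤ) :
    Gseq t u1 (z + 1) = t * Gseq t u1 z - Gseq t u1 (z - 1) := by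
  rcases lt_trichotomy z 0 with hz | rfl | hz
  · have h1 : ¬ (0 ≤ z) := by omega
    have h2 : ¬ (0 ≤ z - 1) := by omega
    by_cases h3 : 0 ≤ z + 1
    · have hz1 : z = -1 := by omega
      subst hz1
      simp only [Gseq]
      norm_num
      show Fseq t u1 0 = t * Fseq t u1 2 - Fseq t u1 3
      simp [Fseq]
    · have e1 : (1 - (z + 1)).toNat + 2 = (1 - (z - 1)).toNat := by omega
      have e2 : (1 - (z + 1)).toNat + 1 = (1 - z).toNat := by omega
      simp only [Gseq, if_neg h1, if_neg h2, if_neg h3]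
      rw [← e1, ← e2]
      show Fseq t u1 _ = t * Fseq t u1 _ - Fseq t u1 ((1 - (z+1)).toNat + 2)
      simp [Fseq]
  · simp only [Gseq]
    norm_num
    show Fseq t u1 1 = t * Fseq t u1 0 - Fseq t u1 2
    simp [Fseq]
  · have h1 : (0:ℤ) ≤ z := hz.le
    have h2 : (0:ℤ) ≤ z - 1 := by omega
    have h3 : (0:ℤ) ≤ z + 1 := by omega
    have e1 : (z - 1).toNat + 2 = (z + 1).toNat := by omega
    have e2 : (z - 1).toNat + 1 = z.toNat := by omega
    simp only [Gseq, if_pos h1, if_pos h2, if_pos h3]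
    rw [← e1, ← e2]
    show Fseq t u1 ((z-1).toNat + 2) = _
    simp [Fseq]

lemma Gseq_reflect (t u1 : ℝ) (m : ℤ) (hm : Gseq t u1 m = 0) :
    ∀ r : ℕ, Gseq t u1 (m + r) = - Gseq t u1 (m - r) := by
  have key : ∀ r : ℕ, Gseq t u1 (m + r) = - Gseq t u1 (m - r) ∧
      Gseq t u1 (m + r + 1) = - Gseq t u1 (m - r - 1) := by
    intro r
    induction r with
    | zero =>
      constructor
      · norm_num [hm]
      · have h := Gseq_rec t u1 m
        rw [hm] at h
        norm_num at h
        simpa using h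
    | succ r ih =>
      obtain ⟨ih1, ih2⟩ := ih
      constructor
      · push_cast
        rw [show (m + ((r:ℤ)+1)) = m + r + 1 from by ring,
            show (m - ((r:ℤ)+1)) = m - r - 1 from by ring]
        exact ih2
      · push_cast
        have hfwd := Gseq_rec t u1 (m + r + 1)
        have hbwd := Gseq_rec t u1 (m - r - 1)
        rw [show (m + (r:ℤ) + 1 - 1) = m + r from by ring] at hfwd
        rw [show (m - (r:ℤ) - 1 + 1) = m - r from by ring] at hbwd
        rw [show (m + ((r:ℤ)+1) + 1) = m + r + 1 + 1 from by ring,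
            show (m - ((r:ℤ)+1) - 1) = m - r - 1 - 1 from by ring]
        rw [hfwd, ih1, ih2]
        linarith [hbwd]
  intro r; exact (key r).1

/-- If `S` is a perfect critical vertex set of the path `P_n` whose complement
`S̄ = {v_{i_1}, …, v_{i_k}}` (`k ≥ 2`, `1 < i_1`, `i_k < n`) is isolated, then the size of
the first interior segment is twice the size of the first segment:
`i_2 - i_1 - 1 = 2(i_1 - 1)`. -/
theorem path_pcvs_interior_segment_size
    (n k : ℕ) (idx : ℕ → ℕ) (hk : 2 ≤ k)
    (hfirst : 1 < idx 1) (hlast : idx k < n)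
    (hiso : ∀ j, 1 ≤ j → j < k → idx j + 2 ≤ idx (j + 1))
    (S : Set (Fin n))
    (hS : ∀ v : Fin n, v ∈ S ↔ ¬ ∃ j, 1 ≤ j ∧ j ≤ k ∧ idx j = (v : ℕ) + 1)
    (lam0 : ℝ) (y : Fin n → ℝ) (hy : y ≠ 0)
    (heig : (pathLap n).mulVec y = lam0 • y)
    (hzero : ∀ v : Fin n, v ∉ S → y v = 0)
    (hnonzero : ∀ v : Fin n, v ∈ S → y v ≠ 0) :
    idx 2 - idx 1 - 1 = 2 * (idx 1 - 1) := by
  -- monotonicity of idx on [1, k]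
  have hmono : ∀ a, 1 ≤ a → ∀ b, a ≤ b → b ≤ k → idx a + 2 * (b - a) ≤ idx b := by
    intro a ha b
    induction b with
    | zero => intro h1 h2; omega
    | succ p ih =>
      intro h1 h2
      rcases Nat.lt_or_ge a (p+1) with h | h
      · have h1' := ih (by omega) (by omega)
        have h2' := hiso p (by omega) (by omega)
        omega
      · have he : a = p + 1 := by omega
        subst he
        omega
  set i1 := idx 1 with hi1def
  set i2 := idx 2 with hi2def
  have hi1 : 2 ≤ i1 := hfirst
  have hi2 : i1 + 2 ≤ i2 := hiso 1 le_rfl (by omega)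
  have hi2n : i2 < n := by
    have := hmono 2 (by omega) k hk le_rfl
    omega
  have hn1 : 1 < n := by omega
  have hn0 : 0 < n := by omega
  set u1 : ℝ := y ⟨0, hn0⟩ with hu1def
  set t : ℝ := 2 - lam0 with htdef
  have heig' : ∀ i : Fin n, (pathLap n).mulVec y i = lam0 * y i := by
    intro i; rw [heig]; rfl
  -- the eigenvector as a sequence
  have hF : ∀ r, (hr : r < n) → Fseq t u1 (r + 1) = y ⟨r, hr⟩ := by
    intro r
    induction r using Nat.strong_induction_on with
    | _ r ih =>
      match r with
      | 0 => intro hr; rfl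
      | 1 =>
        intro hr
        have h0 := heig' ⟨0, hn0⟩
        rw [pathLap_mulVec_zero n y hn1] at h0
        have : y ⟨1, hn1⟩ = (1 - lam0) * y ⟨0, hn0⟩ := by linarith
        show t * Fseq t u1 1 - Fseq t u1 0 = y ⟨1, hr⟩
        have e1 : Fseq t u1 1 = u1 := rfl
        have e0 : Fseq t u1 0 = u1 := rfl
        have he : (⟨1, hr⟩ : Fin n) = ⟨1, hn1⟩ := rfl
        rw [e1, e0, he, this, htdef, hu1def]
        ring
      | (s + 2) =>
        intro hr
        have hs1 : s + 1 < n := by omega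
        have hs0 : s < n := by omega
        have ih1 := ih (s + 1) (by omega) hs1
        have ih0 := ih s (by omega) hs0
        have hint := heig' ⟨s + 1, hs1⟩
        rw [pathLap_mulVec_interior n y ⟨s + 1, hs1⟩ (by simp) (by simpa using hr)] at hint
        have e1 : (⟨(((⟨s+1, hs1⟩ : Fin n)):ℕ) - 1, by omega⟩ : Fin n) = ⟨s, hs0⟩ := rfl
        have e2 : (⟨(((⟨s+1, hs1⟩ : Fin n)):ℕ) + 1, by simpa using hr⟩ : Fin n) = ⟨s+2, hr⟩ := rfl
        rw [e1, e2] at hint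
        show t * Fseq t u1 (s + 2) - Fseq t u1 (s + 1) = y ⟨s + 2, hr⟩
        rw [ih1, ih0, htdef]
        linarith
  -- zeros at the idx positions
  have hFzero : ∀ j, 1 ≤ j → j ≤ k → Fseq t u1 (idx j) = 0 := by
    intro j hj1 hjk
    have hge : i1 ≤ idx j := by have := hmono 1 le_rfl j hj1 hjk; omega
    have hle : idx j < n := by have := hmono j hj1 k hjk le_rfl; omega
    have hlt : idx j - 1 < n := by omega
    have hv : (⟨idx j - 1, hlt⟩ : Fin n) ∉ S := by
      rw [hS]
      simp only [not_not]
      exact ⟨j, hj1, hjk, by show idx j = idx j - 1 + 1; omega⟩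
    have hz := hzero _ hv
    have : idx j - 1 + 1 = idx j := by omega
    rw [← this, hF (idx j - 1) hlt, hz]
  -- nonzero on the first segment
  have hFne : ∀ r, 1 ≤ r → r < i1 → Fseq t u1 r ≠ 0 := by
    intro r h1 h2
    have hlt : r - 1 < n := by omega
    have hv : (⟨r - 1, hlt⟩ : Fin n) ∈ S := by
      rw [hS]
      rintro ⟨j, hj1, hjk, hje⟩
      have : i1 ≤ idx j := by have := hmono 1 le_rfl j hj1 hjk; omega
      simp at hje
      omega
    have := hnonzero _ hv
    have e : r - 1 + 1 = r := by omega
    rw [← e, hF (r - 1) hlt]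
    exact this
  -- nonzero on the first interior segment
  have hFne2 : ∀ r, i1 < r → r < i2 → Fseq t u1 r ≠ 0 := by
    intro r h1 h2
    have hlt : r - 1 < n := by omega
    have hv : (⟨r - 1, hlt⟩ : Fin n) ∈ S := by
      rw [hS]
      rintro ⟨j, hj1, hjk, hje⟩
      simp at hje
      rcases Nat.lt_or_ge j 2 with hj | hj
      · have : j = 1 := by omega
        subst this
        omega
      · have : i2 ≤ idx j := by have := hmono 2 (by omega) j hj hjk; omega
        omega
    have := hnonzero _ hv
    have e : r - 1 + 1 = r := by omega
    rw [← e, hF (r - 1) hlt]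
    exact this
  -- pass to the two-sided sequence
  have hGF : ∀ r : ℕ, Gseq t u1 (r : ℤ) = Fseq t u1 r := by
    intro r; simp [Gseq]
  have hGneg : ∀ r : ℕ, Gseq t u1 (-(r : ℤ)) = Fseq t u1 (r + 1) := by
    intro r
    rcases Nat.eq_zero_or_pos r with rfl | hr
    · simp [Gseq]
      rfl
    · have h : ¬ (0 ≤ -(r : ℤ)) := by omega
      rw [Gseq, if_neg h]
      congr 1
      omega
  have hGm : Gseq t u1 ((i1 : ℕ) : ℤ) = 0 := by
    rw [hGF]; exact hFzero 1 le_rfl (by omega)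
  have refl := Gseq_reflect t u1 (i1 : ℤ) hGm
  have hGne : ∀ z : ℤ, 2 - (i1 : ℤ) ≤ z → z ≤ (i1 : ℤ) - 1 → Gseq t u1 z ≠ 0 := by
    intro z hz1 hz2
    rcases le_or_gt 1 z with h | h
    · have e : z = ((z.toNat : ℕ) : ℤ) := by omega
      rw [e, hGF]
      exact hFne z.toNat (by omega) (by omega)
    · have e : z = -(((-z).toNat : ℕ) : ℤ) := by omega
      rw [e, hGneg]
      exact hFne ((-z).toNat + 1) (by omega) (by omega)
  -- step 1 : i2 ≥ 3 i1 - 1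
  have step1 : 3 * i1 - 1 ≤ i2 := by
    by_contra hcon
    push_neg at hcon
    have h2 := refl (i2 - i1)
    have e1 : ((i1 : ℕ) : ℤ) + ((i2 - i1 : ℕ) : ℤ) = ((i2 : ℕ) : ℤ) := by
      push_cast; omega
    rw [e1, hGF] at h2
    rw [hFzero 2 (by omega) hk] at h2
    have : Gseq t u1 ((i1 : ℤ) - ((i2 - i1 : ℕ) : ℤ)) = 0 := by linarith
    exact hGne _ (by push_cast; omega) (by push_cast; omega) this
  -- step 2 : i2 ≤ 3 i1 - 1
  have step2 : i2 ≤ 3 * i1 - 1 := by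
    by_contra hcon
    push_neg at hcon
    have h2 := refl (2 * i1 - 1)
    have e1 : ((i1 : ℕ) : ℤ) + ((2 * i1 - 1 : ℕ) : ℤ) = ((3 * i1 - 1 : ℕ) : ℤ) := by
      push_cast [Nat.cast_sub (by omega : 1 ≤ 2 * i1), Nat.cast_sub (by omega : 1 ≤ 3 * i1)]
      ring
    have e2 : ((i1 : ℕ) : ℤ) - ((2 * i1 - 1 : ℕ) : ℤ) = -(((i1 - 1 : ℕ) : ℤ)) := by
      push_cast [Nat.cast_sub (by omega : 1 ≤ 2 * i1), Nat.cast_sub (by omega : 1 ≤ i1)]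
      ring
    rw [e1, e2, hGF, hGneg] at h2
    have e3 : i1 - 1 + 1 = i1 := by omega
    rw [e3, hFzero 1 le_rfl (by omega)] at h2
    have h4 : Fseq t u1 (3 * i1 - 1) = 0 := by rw [h2]; ring
    exact hFne2 (3 * i1 - 1) (by omega) (by omega) h4
  omega
end
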